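/- arXiv:1309.5604 — 4 statements merged into one kernel-verified Lean document; each statement's English description precedes it below -/
import Mathlib

section
/- Let A = (a_{ij}) be an n×n nonnegative matrix with positive row sums, whose average 2-row sums m_1 ≥ ... ≥ m_n are sorted in decreasing order. Let S be the smallest diagonal entry, T the smallest off-diagonal entry, and c = min_{i,j} r_j(A)/r_i(A). Then ρ(A) ≥ ψ_n := (m_n + S − Tc + √((m_n − S + Tc)² + 4Tc Σ_{i=1}^{n−1}(m_i − m_n)))/2. -/
/-!
Write `μ` for the smallest average 2-row sum, `t = T c` and `Σ = ∑ⱼ (m_j - μ)`. The bound `ψ` is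
the larger root of `(ψ - μ) (ψ - S + t) = t Σ`, and with `d = ψ - S + t` the vector
`x_j = r_j (d + m_j - μ)` satisfies `A x ≥ ψ x`: expanding `(A x)_j` gives
`d m_j r_j + ∑_k a_jk r_k (m_k - μ)`, and bounding `a_jj ≥ S` and `a_jk r_k ≥ T c r_j` for `k ≠ j`
turns the quadratic relation into exactly `ψ x_j`. A nonnegative matrix with `A x ≥ λ x` for a
vector having a positive entry has `λ^k x_i ≤ ‖A^k‖ ‖x‖`, so `ρ(A) ≥ λ` by Gelfand's formula.
When `ψ ≤ μ` the test vector may vanish, but then `x = r` already gives `ρ(A) ≥ μ ≥ ψ`.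
-/

open Matrix BigOperators Finset

noncomputable def rowSum {n : ℕ} (A : Matrix (Fin n) (Fin n) ℝ) (i : Fin n) : ℝ :=
  ∑ j, A i j

noncomputable def avg2 {n : ℕ} (A : Matrix (Fin n) (Fin n) ℝ) (i : Fin n) : ℝ :=
  (∑ k, A i k * rowSum A k) / rowSum A i

noncomputable def specRad {n : ℕ} (A : Matrix (Fin n) (Fin n) ℝ) : ℝ :=
  sSup {x : ℝ | ∃ μ ∈ spectrum ℂ (A.map Complex.ofReal), x = ‖μ‖}

open Filter Topology

theorem ofReal_le_spectralRadius_of_mul_pow_le_norm_pow {𝔸 : Type*} [NormedRing 𝔸]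
    [NormedAlgebra ℂ 𝔸] [CompleteSpace 𝔸] (a : 𝔸) {C r : ℝ} (hC : 0 < C) (hr : 0 ≤ r)
    (h : ∀ k : ℕ, C * r ^ k ≤ ‖a ^ k‖) :
    ENNReal.ofReal r ≤ spectralRadius ℂ a := by
  have hroot : Tendsto (fun k : ℕ => C ^ (1 / k : ℝ)) atTop (𝓝 1) := by
    simpa using tendsto_const_nhds.rpow tendsto_one_div_atTop_nhds_zero_nat (Or.inl hC.ne')
  have hlow : Tendsto (fun k : ℕ => ENNReal.ofReal (C ^ (1 / k : ℝ) * r)) atTop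
      (𝓝 (ENNReal.ofReal r)) := by
    simpa only [one_mul] using ENNReal.tendsto_ofReal (hroot.mul_const r)
  refine le_of_tendsto_of_tendsto hlow
    (spectrum.pow_norm_pow_one_div_tendsto_nhds_spectralRadius a) ?_
  filter_upwards [eventually_ne_atTop 0] with k hk
  refine ENNReal.ofReal_le_ofReal ?_
  calc C ^ (1 / k : ℝ) * r = (C * r ^ k) ^ (1 / k : ℝ) := by
        rw [Real.mul_rpow hC.le (pow_nonneg hr k), one_div, Real.pow_rpow_inv_natCast hr hk]
    _ ≤ ‖a ^ k‖ ^ (1 / k : ℝ) := Real.rpow_le_rpow (by positivity) (h k) (by positivity)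

theorem mulVec_mono_of_nonneg {ι κ : Type*} [Fintype κ] {A : Matrix ι κ ℝ}
    (hA : ∀ i j, 0 ≤ A i j) {x y : κ → ℝ} (hxy : x ≤ y) : A *ᵥ x ≤ A *ᵥ y :=
  fun i => Finset.sum_le_sum fun j _ => mul_le_mul_of_nonneg_left (hxy j) (hA i j)

theorem pow_smul_le_pow_mulVec {ι : Type*} [Fintype ι] [DecidableEq ι] {A : Matrix ι ι ℝ}
    (hA : ∀ i j, 0 ≤ A i j) {x : ι → ℝ} {r : ℝ} (hr : 0 ≤ r) (h : r • x ≤ A *ᵥ x) (k : ℕ) :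
    r ^ k • x ≤ A ^ k *ᵥ x := by
  induction k with
  | zero => simp
  | succ k ih =>
    calc r ^ (k + 1) • x = r ^ k • r • x := by rw [pow_succ, mul_smul]
      _ ≤ r ^ k • A *ᵥ x := smul_le_smul_of_nonneg_left h (pow_nonneg hr k)
      _ = A *ᵥ r ^ k • x := (mulVec_smul A _ x).symm
      _ ≤ A *ᵥ A ^ k *ᵥ x := mulVec_mono_of_nonneg hA ih
      _ = A ^ (k + 1) *ᵥ x := by rw [mulVec_mulVec, pow_succ']

theorem mul_add_mul_sum_erase_le_sum_mul {ι : Type*} [Fintype ι] [DecidableEq ι]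
    {b w : ι → ℝ} {α β : ℝ} (i : ι) (hw : ∀ k, 0 ≤ w k) (hα : α ≤ b i)
    (hβ : ∀ k, k ≠ i → β ≤ b k) :
    α * w i + β * ∑ k ∈ univ.erase i, w k ≤ ∑ k, b k * w k := by
  rw [← add_sum_erase _ _ (mem_univ i), mul_sum]
  exact add_le_add (mul_le_mul_of_nonneg_right hα (hw i))
    (sum_le_sum fun k hk => mul_le_mul_of_nonneg_right (hβ k (ne_of_mem_erase hk)) (hw k))

theorem specRad_nonneg {n : ℕ} (A : Matrix (Fin n) (Fin n) ℝ) : 0 ≤ specRad A :=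
  Real.sSup_nonneg fun _ ⟨μ, _, hx⟩ => hx ▸ norm_nonneg μ

section LinftyOpNorm

attribute [local instance] Matrix.linftyOpNormedRing Matrix.linftyOpNormedAlgebra

theorem spectralRadius_le_ofReal_specRad {n : ℕ} (A : Matrix (Fin n) (Fin n) ℝ) :
    spectralRadius ℂ (A.map Complex.ofReal) ≤ ENNReal.ofReal (specRad A) := by
  obtain ⟨C, hC⟩ := (spectrum.isBounded (𝕜 := ℂ) (A.map Complex.ofReal)).exists_norm_le
  have hbdd : BddAbove {x : ℝ | ∃ μ ∈ spectrum ℂ (A.map Complex.ofReal), x = ‖μ‖} :=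
    ⟨C, by rintro _ ⟨μ, hμ, rfl⟩; exact hC μ hμ⟩
  refine iSup₂_le fun μ hμ => ?_
  rw [← ENNReal.ofReal_coe_nnreal, coe_nnnorm]
  exact ENNReal.ofReal_le_ofReal (le_csSup hbdd ⟨μ, hμ, rfl⟩)

theorem linfty_opNorm_map_ofReal {ι : Type*} [Fintype ι] [DecidableEq ι] (B : Matrix ι ι ℝ) :
    ‖B.map Complex.ofReal‖ = ‖B‖ := by
  rw [Matrix.linfty_opNorm_def, Matrix.linfty_opNorm_def]
  simp [Complex.nnnorm_real]

theorem le_specRad_of_smul_le_mulVec {n : ℕ} {A : Matrix (Fin n) (Fin n) ℝ}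
    (hA : ∀ i j, 0 ≤ A i j) {x : Fin n → ℝ} {i₀ : Fin n} (hx : 0 < x i₀) {r : ℝ}
    (h : r • x ≤ A *ᵥ x) : r ≤ specRad A := by
  rcases lt_or_ge r 0 with hr | hr
  · exact hr.le.trans (specRad_nonneg A)
  have hxi₀ : x i₀ ≤ ‖x‖ := (Real.le_norm_self _).trans (norm_le_pi_norm x i₀)
  have hx' : 0 < ‖x‖ := hx.trans_le hxi₀
  have hgrowth : ∀ k : ℕ, x i₀ / ‖x‖ * r ^ k ≤ ‖A.map Complex.ofReal ^ k‖ := fun k => by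
    have hmap : A.map Complex.ofReal ^ k = (A ^ k).map Complex.ofReal :=
      (A.map_pow Complex.ofRealHom k).symm
    rw [hmap, linfty_opNorm_map_ofReal, div_mul_eq_mul_div, div_le_iff₀ hx']
    calc x i₀ * r ^ k = (r ^ k • x) i₀ := mul_comm _ _
      _ ≤ (A ^ k *ᵥ x) i₀ := pow_smul_le_pow_mulVec hA hr h k i₀
      _ ≤ ‖A ^ k *ᵥ x‖ := (Real.le_norm_self _).trans (norm_le_pi_norm _ i₀)
      _ ≤ ‖A ^ k‖ * ‖x‖ := Matrix.linfty_opNorm_mulVec _ _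
  exact (ENNReal.ofReal_le_ofReal_iff (specRad_nonneg A)).mp
    ((ofReal_le_spectralRadius_of_mul_pow_le_norm_pow _ (div_pos hx hx') hr hgrowth).trans
      (spectralRadius_le_ofReal_specRad A))

end LinftyOpNorm

noncomputable def avg2TestVector {n : ℕ} (A : Matrix (Fin n) (Fin n) ℝ) (d μ : ℝ) :
    Fin n → ℝ :=
  fun j => rowSum A j * (d + (avg2 A j - μ))

section AverageTwoRowSums

variable {n : ℕ} {A : Matrix (Fin n) (Fin n) ℝ}

theorem sum_mul_rowSum_eq {i : Fin n} (hi : rowSum A i ≠ 0) :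
    ∑ k, A i k * rowSum A k = avg2 A i * rowSum A i := by
  rw [avg2, div_mul_cancel₀ _ hi]

theorem diag_le_avg2 (hA : ∀ i j, 0 ≤ A i j) (hr : ∀ i, 0 < rowSum A i) (i : Fin n) :
    A i i ≤ avg2 A i := by
  refine le_of_mul_le_mul_right ?_ (hr i)
  rw [← sum_mul_rowSum_eq (hr i).ne']
  exact single_le_sum (f := fun k => A i k * rowSum A k)
    (fun k _ => mul_nonneg (hA i k) (hr k).le) (mem_univ i)

theorem le_specRad_of_forall_le_avg2 [NeZero n] (hA : ∀ i j, 0 ≤ A i j)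
    (hr : ∀ i, 0 < rowSum A i) {μ : ℝ} (hμ : ∀ i, μ ≤ avg2 A i) : μ ≤ specRad A := by
  refine le_specRad_of_smul_le_mulVec hA (hr 0) fun i => ?_
  change μ * rowSum A i ≤ ∑ k, A i k * rowSum A k
  rw [sum_mul_rowSum_eq (hr i).ne']
  exact mul_le_mul_of_nonneg_right (hμ i) (hr i).le

theorem smul_avg2TestVector_le_mulVec
    (hA : ∀ i j, 0 ≤ A i j) (hr : ∀ i, 0 < rowSum A i) {S T c μ ψ : ℝ}
    (hS : ∀ i, S ≤ A i i) (hT : ∀ i j, i ≠ j → T ≤ A i j)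
    (hc : ∀ i j, c ≤ rowSum A j / rowSum A i) (hc0 : 0 ≤ c) (hμ : ∀ j, μ ≤ avg2 A j)
    (hψ : (ψ - μ) * (ψ - S + T * c) = T * c * ∑ j, (avg2 A j - μ)) :
    ψ • avg2TestVector A (ψ - S + T * c) μ ≤ A *ᵥ avg2TestVector A (ψ - S + T * c) μ := by
  intro i
  set d := ψ - S + T * c
  have hexpand : (A *ᵥ avg2TestVector A d μ) i
      = d * (avg2 A i * rowSum A i) + ∑ k, A i k * rowSum A k * (avg2 A k - μ) := by
    simp only [mulVec, dotProduct, avg2TestVector]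
    rw [← sum_mul_rowSum_eq (hr i).ne', mul_sum, ← sum_add_distrib]
    exact sum_congr rfl fun k _ => by ring
  have hoff : ∀ k, k ≠ i → T * c * rowSum A i ≤ A i k * rowSum A k := fun k hk =>
    calc T * c * rowSum A i = T * (c * rowSum A i) := mul_assoc _ _ _
      _ ≤ A i k * rowSum A k := mul_le_mul (hT i k hk.symm)
        ((le_div_iff₀ (hr i)).mp (hc i k)) (mul_nonneg hc0 (hr i).le) (hA i k)
  have hweighted := mul_add_mul_sum_erase_le_sum_mul i (fun k => sub_nonneg.mpr (hμ k))
    (mul_le_mul_of_nonneg_right (hS i) (hr i).le) hoff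
  rw [sum_erase_eq_sub (mem_univ i)] at hweighted
  rw [hexpand]
  change ψ * (rowSum A i * (d + (avg2 A i - μ))) ≤ _
  linear_combination hweighted + rowSum A i * hψ

theorem avg2_bound_le_specRad
    (hA : ∀ i j, 0 ≤ A i j) (hr : ∀ i, 0 < rowSum A i) {S T c : ℝ}
    (hS : ∀ i, S ≤ A i i) (hT : ∀ i j, i ≠ j → T ≤ A i j)
    (hc : ∀ i j, c ≤ rowSum A j / rowSum A i) (hT0 : 0 ≤ T) (hc0 : 0 ≤ c) {j₀ : Fin n}
    (hj₀ : ∀ j, avg2 A j₀ ≤ avg2 A j) :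
    (avg2 A j₀ + S - T * c + √((avg2 A j₀ - S + T * c) ^ 2 +
      4 * T * c * ∑ j, (avg2 A j - avg2 A j₀))) / 2 ≤ specRad A := by
  set μ := avg2 A j₀
  set spread := ∑ j, (avg2 A j - μ)
  obtain ⟨ψ, hψ⟩ :
      ∃ ψ, ψ = (μ + S - T * c + √((μ - S + T * c) ^ 2 + 4 * T * c * spread)) / 2 := ⟨_, rfl⟩
  rw [← hψ]
  have htspread : 0 ≤ T * c * spread :=
    mul_nonneg (mul_nonneg hT0 hc0) (sum_nonneg fun j _ => sub_nonneg.mpr (hj₀ j))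
  have hroot : (ψ - μ) * (ψ - S + T * c) = T * c * spread := by
    have hsq := Real.sq_sqrt (by linarith [sq_nonneg (μ - S + T * c)] :
      0 ≤ (μ - S + T * c) ^ 2 + 4 * T * c * spread)
    rw [hψ]
    linear_combination hsq / 4
  rcases le_or_gt ψ μ with hle | hlt
  · have : NeZero n := ⟨j₀.pos.ne'⟩
    exact hle.trans (le_specRad_of_forall_le_avg2 hA hr hj₀)
  · have hd : 0 < ψ - S + T * c := by
      nlinarith [hS j₀, diag_le_avg2 hA hr j₀, mul_nonneg hT0 hc0]
    refine le_specRad_of_smul_le_mulVec hA (i₀ := j₀) ?_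
      (smul_avg2TestVector_le_mulVec hA hr hS hT hc hc0 hj₀ hroot)
    simpa [avg2TestVector, μ] using mul_pos (hr j₀) hd

end AverageTwoRowSums

theorem stmt4_general {n : ℕ} (hn : 0 < n) (A : Matrix (Fin n) (Fin n) ℝ)
    (hA : ∀ i j, 0 ≤ A i j) (hr : ∀ i, 0 < rowSum A i)
    (m : Fin n → ℝ) (σ : Equiv.Perm (Fin n)) (hm : ∀ i, m i = avg2 A (σ i))
    (hmono : Antitone m) (S T c : ℝ)
    (hS : ∀ i, S ≤ A i i)
    (hT : ∀ i j, i ≠ j → T ≤ A i j) (hT' : ∃ i j, i ≠ j ∧ A i j = T)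
    (hc : ∀ i j, c ≤ rowSum A j / rowSum A i)
    (hc' : ∃ i j, rowSum A j / rowSum A i = c) :
    (m (⟨n - 1, Nat.sub_lt hn Nat.one_pos⟩ : Fin n) + S - T * c +
      Real.sqrt ((m (⟨n - 1, Nat.sub_lt hn Nat.one_pos⟩ : Fin n) - S + T * c) ^ 2 +
        4 * T * c * ∑ i ∈ Finset.univ.filter
            (fun i => i < (⟨n - 1, Nat.sub_lt hn Nat.one_pos⟩ : Fin n)),
          (m i - m (⟨n - 1, Nat.sub_lt hn Nat.one_pos⟩ : Fin n)))) / 2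
      ≤ specRad A := by
  set last : Fin n := ⟨n - 1, Nat.sub_lt hn Nat.one_pos⟩
  have hle_last : ∀ i, i ≤ last := fun i => Fin.le_iff_val_le_val.mpr (Nat.le_sub_one_of_lt i.isLt)
  have hT0 : 0 ≤ T := by
    obtain ⟨i, j, -, rfl⟩ := hT'
    exact hA i j
  have hc0 : 0 ≤ c := by
    obtain ⟨i, j, rfl⟩ := hc'
    exact div_nonneg (hr j).le (hr i).le
  have hmin : ∀ j, avg2 A (σ last) ≤ avg2 A j := fun j => by
    simpa [hm] using hmono (hle_last (σ.symm j))
  have hsum : ∑ i ∈ univ.filter (· < last), (m i - m last)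
      = ∑ j, (avg2 A j - avg2 A (σ last)) := by
    rw [sum_filter_of_ne fun i _ hi => lt_of_le_of_ne (hle_last i) (by rintro rfl; simp at hi)]
    simpa only [hm] using Equiv.sum_comp σ (fun j => avg2 A j - avg2 A (σ last))
  rw [hsum, hm last]
  exact avg2_bound_le_specRad hA hr hS hT hc hT0 hc0 hmin

theorem stmt4 {n : ℕ} (hn : 0 < n) (A : Matrix (Fin n) (Fin n) ℝ)
    (hA : ∀ i j, 0 ≤ A i j) (hr : ∀ i, 0 < rowSum A i)
    (m : Fin n → ℝ) (σ : Equiv.Perm (Fin n)) (hm : ∀ i, m i = avg2 A (σ i))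
    (hmono : Antitone m) (S T c : ℝ)
    (hS : ∀ i, S ≤ A i i) (hS' : ∃ i, A i i = S)
    (hT : ∀ i j, i ≠ j → T ≤ A i j) (hT' : ∃ i j, i ≠ j ∧ A i j = T)
    (hc : ∀ i j, c ≤ rowSum A j / rowSum A i)
    (hc' : ∃ i j, rowSum A j / rowSum A i = c) :
    (m (⟨n - 1, Nat.sub_lt hn Nat.one_pos⟩ : Fin n) + S - T * c +
      Real.sqrt ((m (⟨n - 1, Nat.sub_lt hn Nat.one_pos⟩ : Fin n) - S + T * c) ^ 2 +
        4 * T * c * ∑ i ∈ Finset.univ.filter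
            (fun i => i < (⟨n - 1, Nat.sub_lt hn Nat.one_pos⟩ : Fin n)),
          (m i - m (⟨n - 1, Nat.sub_lt hn Nat.one_pos⟩ : Fin n)))) / 2
      ≤ specRad A :=
  stmt4_general hn A hA hr m σ hm hmono S T c hS hT hT' hc hc'
end

section
/- Let G be a graph on n ≥ 2 vertices without isolated vertices, with signless Laplacian average 2-degrees m_1 ≥ ... ≥ m_n. Then for each 1 ≤ l ≤ n, ρ(Q(G)) ≤ (m_l + d_max − d_max/d_min + √((m_l − d_max + d_max/d_min)² + 4(d_max/d_min) Σ_{i=1}^{l−1}(m_i − m_l)))/2. -/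
open Matrix BigOperators Finset

/-!
Collatz–Wielandt bound: if a positive vector `w` satisfies `Q w ≤ R w` entrywise for the nonnegative
matrix `Q`, then every eigenvalue of `Q` has modulus at most `R` (compare an eigenvector with `w`
at the coordinate maximising `|x_v| / w_v`). Take `w_v = d_v (1 + γ e_v)`, where
`e_v = max (m_v - m_l) 0` is the excess of the average 2-degree of `v` over `m_l`, so that
`∑ e_v = ∑_{i<l} (m_i - m_l) =: S`. With `t = Δ/δ` every degree is at most `t d_v`, and `Q w ≤ R w`
reduces to `γ t S ≤ R - m_l` and `γ (R - Δ + t) ≥ 1`. If `R` is the larger root of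
`(x - m_l)(x - Δ + t) = t S`, both hold with `γ = (R - m_l) / (t S)`, and this `R` is the bound.
-/

theorem Matrix.exists_mulVec_eq_smul_of_mem_spectrum {ι K : Type*} [Fintype ι] [DecidableEq ι]
    [Field K] {A : Matrix ι ι K} {μ : K} (hμ : μ ∈ spectrum K A) :
    ∃ x ≠ 0, A *ᵥ x = μ • x := by
  rw [← spectrum_toLin', ← Module.End.hasEigenvalue_iff_mem_spectrum] at hμ
  obtain ⟨x, hx⟩ := hμ.exists_hasEigenvector
  exact ⟨x, hx.2, by simpa using hx.apply_eq_smul⟩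

theorem Matrix.norm_le_of_mulVec_le {ι : Type*} [Fintype ι] [DecidableEq ι] {A : Matrix ι ι ℝ}
    (hA : ∀ i j, 0 ≤ A i j) {w : ι → ℝ} (hw : ∀ i, 0 < w i) {R : ℝ}
    (hAw : ∀ i, (A *ᵥ w) i ≤ R * w i) {μ : ℂ} (hμ : μ ∈ spectrum ℂ (A.map Complex.ofReal)) :
    ‖μ‖ ≤ R := by
  obtain ⟨x, hx0, hx⟩ := exists_mulVec_eq_smul_of_mem_spectrum hμ
  obtain ⟨k, hk⟩ := Function.ne_iff.mp hx0
  have : Nonempty ι := ⟨k⟩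
  obtain ⟨p, hp⟩ := Finite.exists_max fun k => ‖x k‖ / w k
  set c := ‖x p‖ / w p
  have hc : 0 < c := (div_pos (norm_pos_iff.mpr hk) (hw k)).trans_le (hp k)
  have hxp : ‖x p‖ = c * w p := (div_mul_cancel₀ _ (hw p).ne').symm
  have key : ‖μ‖ * (c * w p) ≤ R * (c * w p) := calc
    ‖μ‖ * (c * w p) = ‖∑ j, (A p j : ℂ) * x j‖ := by
      rw [← hxp, ← norm_mul, ← smul_eq_mul, ← Pi.smul_apply, ← hx]; rfl
    _ ≤ ∑ j, A p j * ‖x j‖ := by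
      refine (norm_sum_le _ _).trans_eq (sum_congr rfl fun j _ => ?_)
      rw [norm_mul, Complex.norm_real, Real.norm_of_nonneg (hA p j)]
    _ ≤ ∑ j, A p j * (c * w j) := by
      gcongr with j _
      · exact hA p j
      · exact (div_le_iff₀ (hw j)).mp (hp j)
    _ = c * (A *ᵥ w) p := by
      simp only [mulVec, dotProduct, mul_sum]
      exact sum_congr rfl fun j _ => mul_left_comm _ _ _
    _ ≤ R * (c * w p) := by nlinarith [hAw p]
  exact le_of_mul_le_mul_right key (mul_pos hc (hw p))

theorem specRad_le_of_mulVec_le {n : ℕ} [Nonempty (Fin n)] {A : Matrix (Fin n) (Fin n) ℝ}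
    (hA : ∀ i j, 0 ≤ A i j) {w : Fin n → ℝ} (hw : ∀ i, 0 < w i) {R : ℝ}
    (hAw : ∀ i, (A *ᵥ w) i ≤ R * w i) : specRad A ≤ R := by
  obtain ⟨i⟩ := ‹Nonempty (Fin n)›
  have hR : 0 ≤ R := by
    have : 0 ≤ (A *ᵥ w) i := show 0 ≤ ∑ j, A i j * w j from
      sum_nonneg fun j _ => mul_nonneg (hA i j) (hw j).le
    exact nonneg_of_mul_nonneg_left (this.trans (hAw i)) (hw i)
  refine Real.sSup_le ?_ hR
  rintro _ ⟨μ, hμ, rfl⟩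
  exact A.norm_le_of_mulVec_le hA hw hAw hμ

/-- The larger root of `(x - a) * (x - b) = c`. -/
noncomputable def upperRoot (a b c : ℝ) : ℝ := (a + b + √((a - b) ^ 2 + 4 * c)) / 2

section upperRoot

variable {a b c : ℝ}

theorem left_le_upperRoot (hc : 0 ≤ c) : a ≤ upperRoot a b c := by
  have := abs_le.mp (Real.abs_le_sqrt (by linarith : (a - b) ^ 2 ≤ (a - b) ^ 2 + 4 * c))
  unfold upperRoot
  linarith [this.2]

theorem right_le_upperRoot (hc : 0 ≤ c) : b ≤ upperRoot a b c := by
  have := abs_le.mp (Real.abs_le_sqrt (by linarith : (a - b) ^ 2 ≤ (a - b) ^ 2 + 4 * c))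
  unfold upperRoot
  linarith [this.1]

theorem upperRoot_sub_mul_upperRoot_sub (hc : 0 ≤ c) :
    (upperRoot a b c - a) * (upperRoot a b c - b) = c := by
  have := Real.sq_sqrt (by positivity : 0 ≤ (a - b) ^ 2 + 4 * c)
  unfold upperRoot
  linear_combination this / 4

end upperRoot

theorem Antitone.sum_max_sub_zero_eq {ι : Type*} [Fintype ι] [LinearOrder ι] {m : ι → ℝ}
    (hm : Antitone m) (l : ι) :
    ∑ i, max (m i - m l) 0 = ∑ i with i < l, (m i - m l) := by
  rw [sum_filter]
  refine sum_congr rfl fun i _ => ?_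
  split_ifs with h
  · exact max_eq_left (sub_nonneg.mpr (hm h.le))
  · exact max_eq_right (sub_nonpos.mpr (hm (not_lt.mp h)))

namespace SimpleGraph

variable {V : Type*} [Fintype V] [DecidableEq V] (G : SimpleGraph V) [DecidableRel G.Adj]

/-- The signless Laplacian average 2-degree `m_v(Q(G))`. -/
noncomputable def avgTwoDegree (v : V) : ℝ :=
  G.degree v + (∑ u ∈ G.neighborFinset v, (G.degree u : ℝ)) / G.degree v

theorem sum_neighborFinset_le_sum_sub {f : V → ℝ} (hf : ∀ v, 0 ≤ f v) (v : V) :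
    ∑ u ∈ G.neighborFinset v, f u ≤ ∑ u, f u - f v := by
  rw [← sum_erase_eq_sub (mem_univ v)]
  refine sum_le_sum_of_subset_of_nonneg (fun u hu => ?_) fun u _ _ => hf u
  exact mem_erase.mpr ⟨(G.ne_of_adj ((G.mem_neighborFinset v u).mp hu)).symm, mem_univ u⟩

theorem degMatrix_add_adjMatrix_mulVec_apply (w : V → ℝ) (v : V) :
    ((G.degMatrix ℝ + G.adjMatrix ℝ) *ᵥ w) v =
      G.degree v * w v + ∑ u ∈ G.neighborFinset v, w u := by
  rw [add_mulVec, Pi.add_apply, degMatrix_mulVec_apply, adjMatrix_mulVec_apply]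

theorem degMatrix_add_adjMatrix_mulVec_le (hdeg : ∀ v, 0 < G.degree v) {e : V → ℝ}
    (he : ∀ v, 0 ≤ e v) {M t γ R : ℝ} (hM : ∀ v, G.avgTwoDegree v ≤ M + e v)
    (ht : ∀ u v, (G.degree u : ℝ) ≤ t * G.degree v) (hγ : 0 ≤ γ)
    (hγS : γ * (t * ∑ u, e u) ≤ R - M) (hγR : ∀ v, e v ≠ 0 → 1 ≤ γ * (R - G.degree v + t))
    (v : V) :
    ((G.degMatrix ℝ + G.adjMatrix ℝ) *ᵥ fun u => G.degree u * (1 + γ * e u)) v ≤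
      R * (G.degree v * (1 + γ * e v)) := by
  set d : V → ℝ := fun u => G.degree u
  set S := ∑ u, e u
  have hdv : 0 < d v := Nat.cast_pos.mpr (hdeg v)
  have htv : 0 ≤ t * d v := hdv.le.trans (ht v v)
  have hdeg_sum : ∑ u ∈ G.neighborFinset v, d u = d v * (G.avgTwoDegree v - d v) := by
    rw [avgTwoDegree, add_sub_cancel_left, mul_div_cancel₀ _ hdv.ne']
  have hweighted : ∑ u ∈ G.neighborFinset v, d u * e u ≤ t * d v * (S - e v) := calc
    ∑ u ∈ G.neighborFinset v, d u * e u ≤ ∑ u ∈ G.neighborFinset v, t * d v * e u :=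
      sum_le_sum fun u _ => mul_le_mul_of_nonneg_right (ht u v) (he u)
    _ ≤ t * d v * (S - e v) := by
      rw [← mul_sum]
      exact mul_le_mul_of_nonneg_left (G.sum_neighborFinset_le_sum_sub he v) htv
  have hexcess : e v * (1 + γ * (d v - t)) ≤ e v * (γ * R) := by
    rcases (he v).eq_or_lt with h | h
    · simp [← h]
    · exact mul_le_mul_of_nonneg_left (by linarith [hγR v h.ne']) h.le
  have hsplit : ∑ u ∈ G.neighborFinset v, d u * (1 + γ * e u) =
      ∑ u ∈ G.neighborFinset v, d u + γ * ∑ u ∈ G.neighborFinset v, d u * e u := by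
    rw [mul_sum, ← sum_add_distrib]
    exact sum_congr rfl fun u _ => by ring
  rw [degMatrix_add_adjMatrix_mulVec_apply, hsplit, hdeg_sum]
  nlinarith [mul_le_mul_of_nonneg_left (hM v) hdv.le, mul_le_mul_of_nonneg_left hweighted hγ,
    mul_le_mul_of_nonneg_left hγS hdv.le, mul_le_mul_of_nonneg_left hexcess hdv.le]

end SimpleGraph

theorem SimpleGraph.specRad_degMatrix_add_adjMatrix_le {n : ℕ} [Nonempty (Fin n)]
    (G : SimpleGraph (Fin n)) [DecidableRel G.Adj] (hdeg : ∀ v, 0 < G.degree v)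
    {e : Fin n → ℝ} (he : ∀ v, 0 ≤ e v) {M Δ t : ℝ} (hM : ∀ v, G.avgTwoDegree v ≤ M + e v)
    (hΔ : ∀ v, (G.degree v : ℝ) ≤ Δ) (ht : ∀ v, Δ ≤ t * G.degree v) :
    specRad (G.degMatrix ℝ + G.adjMatrix ℝ) ≤ upperRoot M (Δ - t) (t * ∑ v, e v) := by
  obtain ⟨v₀⟩ := ‹Nonempty (Fin n)›
  have hd : ∀ v, (0 : ℝ) < G.degree v := fun v => Nat.cast_pos.mpr (hdeg v)
  set S := ∑ v, e v
  set R := upperRoot M (Δ - t) (t * S)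
  have ht0 : 0 < t := pos_of_mul_pos_left ((hd v₀).trans_le ((hΔ v₀).trans (ht v₀))) (hd v₀).le
  have htS : 0 ≤ t * S := mul_nonneg ht0.le (sum_nonneg fun v _ => he v)
  have hRM : M ≤ R := left_le_upperRoot htS
  -- When `S = 0` the division gives `γ = 0`, which is all that is needed there.
  set γ := (R - M) / (t * S)
  have hγ : 0 ≤ γ := div_nonneg (sub_nonneg.mpr hRM) htS
  have hγS : γ * (t * S) ≤ R - M := by
    rcases htS.eq_or_lt with h | h
    · rw [← h, mul_zero]
      exact sub_nonneg.mpr hRM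
    · rw [div_mul_cancel₀ _ h.ne']
  have hγR : ∀ v, e v ≠ 0 → 1 ≤ γ * (R - G.degree v + t) := by
    intro v hv
    have hS : 0 < S :=
      ((he v).lt_of_ne' hv).trans_le (single_le_sum (fun u _ => he u) (mem_univ v))
    have hγ_root : γ * (R - (Δ - t)) = 1 := by
      rw [div_mul_eq_mul_div, upperRoot_sub_mul_upperRoot_sub htS, div_self (mul_pos ht0 hS).ne']
    nlinarith [hΔ v]
  refine specRad_le_of_mulVec_le (w := fun u => G.degree u * (1 + γ * e u)) (fun i j => ?_)
    (fun u => mul_pos (hd u) (by nlinarith [he u]))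
    (G.degMatrix_add_adjMatrix_mulVec_le hdeg he hM (fun u v => (hΔ u).trans (ht v)) hγ hγS hγR)
  simp only [Matrix.add_apply, degMatrix, diagonal_apply, adjMatrix_apply]
  split_ifs <;> positivity

theorem stmt10_general {n : ℕ} (G : SimpleGraph (Fin n)) [DecidableRel G.Adj]
    (hiso : ∀ v, 0 < G.degree v)
    (m : Fin n → ℝ) (σ : Equiv.Perm (Fin n))
    (hm : ∀ i, m i = (G.degree (σ i) : ℝ) +
      (∑ j ∈ G.neighborFinset (σ i), (G.degree j : ℝ)) / (G.degree (σ i) : ℝ))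
    (hmono : Antitone m) (dmax dmin : ℕ)
    (hdmax : ∀ v, G.degree v ≤ dmax)
    (hdmin : ∀ v, dmin ≤ G.degree v) (hdmin' : ∃ v, G.degree v = dmin)
    (l : Fin n) :
    specRad (Matrix.diagonal (fun i => (G.degree i : ℝ)) + G.adjMatrix ℝ) ≤
      (m l + (dmax : ℝ) - (dmax : ℝ) / (dmin : ℝ) +
        Real.sqrt ((m l - (dmax : ℝ) + (dmax : ℝ) / (dmin : ℝ)) ^ 2 +
          4 * ((dmax : ℝ) / (dmin : ℝ)) *
            ∑ i ∈ Finset.univ.filter (fun i => i < l), (m i - m l))) / 2 := by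
  have : Nonempty (Fin n) := ⟨l⟩
  have hm' : ∀ i, m i = G.avgTwoDegree (σ i) := hm
  have hdmin_pos : (0 : ℝ) < dmin := by
    obtain ⟨v, hv⟩ := hdmin'
    exact_mod_cast hv ▸ hiso v
  have hexcess : ∑ v, max (G.avgTwoDegree v - m l) 0 = ∑ i with i < l, (m i - m l) := by
    rw [← hmono.sum_max_sub_zero_eq l, ← Equiv.sum_comp σ]
    exact sum_congr rfl fun i _ => by rw [← hm' i]
  have key := G.specRad_degMatrix_add_adjMatrix_le hiso (fun v => le_max_right _ _)
    (M := m l) (fun v => by linarith [le_max_left (G.avgTwoDegree v - m l) 0])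
    (Δ := dmax) (t := dmax / dmin) (fun v => by exact_mod_cast hdmax v) fun v => by
      rw [div_mul_eq_mul_div, le_div_iff₀ hdmin_pos]
      exact mul_le_mul_of_nonneg_left (by exact_mod_cast hdmin v) (Nat.cast_nonneg _)
  rw [hexcess] at key
  refine key.trans_eq ?_
  unfold upperRoot
  ring_nf

theorem stmt10 {n : ℕ} (hn : 2 ≤ n) (G : SimpleGraph (Fin n)) [DecidableRel G.Adj]
    (hiso : ∀ v, 0 < G.degree v)
    (m : Fin n → ℝ) (σ : Equiv.Perm (Fin n))
    (hm : ∀ i, m i = (G.degree (σ i) : ℝ) +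
      (∑ j ∈ G.neighborFinset (σ i), (G.degree j : ℝ)) / (G.degree (σ i) : ℝ))
    (hmono : Antitone m) (dmax dmin : ℕ)
    (hdmax : ∀ v, G.degree v ≤ dmax) (hdmax' : ∃ v, G.degree v = dmax)
    (hdmin : ∀ v, dmin ≤ G.degree v) (hdmin' : ∃ v, G.degree v = dmin)
    (l : Fin n) :
    specRad (Matrix.diagonal (fun i => (G.degree i : ℝ)) + G.adjMatrix ℝ) ≤
      (m l + (dmax : ℝ) - (dmax : ℝ) / (dmin : ℝ) +
        Real.sqrt ((m l - (dmax : ℝ) + (dmax : ℝ) / (dmin : ℝ)) ^ 2 +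
          4 * ((dmax : ℝ) / (dmin : ℝ)) *
            ∑ i ∈ Finset.univ.filter (fun i => i < l), (m i - m l))) / 2 :=
  stmt10_general G hiso m σ hm hmono dmax dmin hdmax hdmin hdmin' l
end

section
/- Let G be a connected graph on n ≥ 2 vertices, D(G) its distance matrix, and m_1 ≥ ... ≥ m_n the average 2-transmissions of G. For each 1 ≤ l ≤ n, ρ(D(G)) ≤ (m_l − 𝔇·D_max/D_min + √((m_l + 𝔇·D_max/D_min)² + 4𝔇·(D_max/D_min) Σ_{i=1}^{l−1}(m_i − m_l)))/2, with equality if and only if m_1 = ... = m_n. -/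
/-!
Write `r` for the transmissions, `m` for the average 2-transmissions, `μ = m_l` and
`s = 𝔇 D_max / D_min`, so that `d_ij r_j ≤ s r_i` for all `i, j`. Since `m` is sorted,
`∑_{i<l} (m_i - m_l) = ∑_j (m_j - μ)⁺ =: T`, and the claimed bound is the root `c ≥ μ` of
`(c - μ)(c + s) = s T`. For this `c` the positive vector `w_i = r_i (c + s + (m_i - μ)⁺)`
satisfies `D w ≤ c w` (the defect `c w - D w` is a sum of nonnegative terms), so `ρ(D) ≤ c`
by the Collatz–Wielandt bound.

If `ρ(D) = c`, then `D w = c w`, because `D` has positive off-diagonal entries. Every term of the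
defect vanishes: `m_i ≥ μ` for all `i`, and any `j` with `m_j > μ` satisfies `d_ij r_j = s r_i`,
which forces `d_ij = 𝔇` for all `i ≠ j`. As `j` has a neighbour, `𝔇 = 1`, so `G` is complete
and `m` is constant. Conversely, if `m` is constant then `T = 0`, `c = μ`, and `r` is a
positive eigenvector of `D` for `μ`.
-/

open Matrix BigOperators Finset

section Spectrum

variable {ι : Type*} [Fintype ι]

theorem Matrix.mulVec_apply_nonneg {A : Matrix ι ι ℝ} (hA : ∀ i j, 0 ≤ A i j) {z : ι → ℝ}
    (hz : ∀ i, 0 ≤ z i) (i : ι) : 0 ≤ (A *ᵥ z) i :=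
  sum_nonneg fun j _ => mul_nonneg (hA i j) (hz j)

variable [DecidableEq ι]

theorem Matrix.mem_spectrum_iff_exists_mulVec_eq_smul {K : Type*} [Field K]
    {A : Matrix ι ι K} {μ : K} : μ ∈ spectrum K A ↔ ∃ v ≠ 0, A *ᵥ v = μ • v := by
  rw [← Matrix.spectrum_toLin', ← Module.End.hasEigenvalue_iff_mem_spectrum]
  constructor
  · intro h
    obtain ⟨v, hv⟩ := h.exists_hasEigenvector
    exact ⟨v, hv.2, Module.End.mem_eigenspace_iff.1 hv.1⟩
  · rintro ⟨v, hv0, hv⟩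
    exact Module.End.hasEigenvalue_of_hasEigenvector ⟨Module.End.mem_eigenspace_iff.2 hv, hv0⟩

theorem norm_le_of_mem_spectrum_of_mulVec_le {A : Matrix ι ι ℝ} (hA : ∀ i j, 0 ≤ A i j) {z : ι → ℝ}
    (hz : ∀ i, 0 < z i) {c : ℝ} (h : A *ᵥ z ≤ c • z) {μ : ℂ}
    (hμ : μ ∈ spectrum ℂ (A.map Complex.ofReal)) : ‖μ‖ ≤ c := by
  obtain ⟨v, hv0, hv⟩ := Matrix.mem_spectrum_iff_exists_mulVec_eq_smul.1 hμ
  obtain ⟨k, hk⟩ := Function.ne_iff.1 hv0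
  have : Nonempty ι := ⟨k⟩
  obtain ⟨i, hi⟩ := Finite.exists_max fun j => ‖v j‖ / z j
  set t := ‖v i‖ / z i
  have hvt : ∀ j, ‖v j‖ ≤ t * z j := fun j => (div_le_iff₀ (hz j)).1 (hi j)
  have ht : 0 < t := (div_pos (norm_pos_iff.2 hk) (hz k)).trans_le (hi k)
  have key : ‖μ‖ * (t * z i) ≤ c * (t * z i) :=
    calc ‖μ‖ * (t * z i) = ‖(A.map Complex.ofReal *ᵥ v) i‖ := by
          rw [hv, Pi.smul_apply, smul_eq_mul, norm_mul, div_mul_cancel₀ _ (hz i).ne']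
      _ ≤ ∑ j, A i j * ‖v j‖ := by
          simp only [mulVec, dotProduct, map_apply]
          refine (norm_sum_le _ _).trans_eq (sum_congr rfl fun j _ => ?_)
          rw [norm_mul, Complex.norm_real, Real.norm_of_nonneg (hA i j)]
      _ ≤ ∑ j, A i j * (t * z j) := by gcongr with j; exacts [hA i j, hvt j]
      _ = t * (A *ᵥ z) i := by
          simp only [mulVec, dotProduct, mul_sum]
          exact sum_congr rfl fun j _ => by ring
      _ ≤ t * (c * z i) := by gcongr; exact h i
      _ = c * (t * z i) := by ring
  exact le_of_mul_le_mul_right key (mul_pos ht (hz i))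

end Spectrum

section SpectralRadius

variable {n : ℕ} {A : Matrix (Fin n) (Fin n) ℝ}

theorem specRad_le_of_mulVec_le_s11 [NeZero n] (hA : ∀ i j, 0 ≤ A i j) {z : Fin n → ℝ}
    (hz : ∀ i, 0 < z i) {c : ℝ} (h : A *ᵥ z ≤ c • z) : specRad A ≤ c := by
  have hc : 0 ≤ c := nonneg_of_mul_nonneg_left
    ((mulVec_apply_nonneg hA (fun i => (hz i).le) 0).trans (h 0)) (hz 0)
  refine Real.sSup_le ?_ hc
  rintro _ ⟨μ, hμ, rfl⟩
  exact norm_le_of_mem_spectrum_of_mulVec_le hA hz h hμ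

theorem specRad_eq_of_mulVec_eq_smul [NeZero n] (hA : ∀ i j, 0 ≤ A i j) {x : Fin n → ℝ}
    (hx : ∀ i, 0 < x i) {c : ℝ} (h : A *ᵥ x = c • x) : specRad A = c := by
  refine le_antisymm (specRad_le_of_mulVec_le_s11 hA hx h.le) ?_
  have hmem : (c : ℂ) ∈ spectrum ℂ (A.map Complex.ofReal) := by
    refine Matrix.mem_spectrum_iff_exists_mulVec_eq_smul.2
      ⟨Complex.ofReal ∘ x, fun h0 => (hx 0).ne' (by simpa using congrFun h0 0), ?_⟩
    ext i
    have := RingHom.map_mulVec Complex.ofRealHom A x i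
    rw [h, Pi.smul_apply, smul_eq_mul, map_mul] at this
    exact this.symm
  refine (le_abs_self c).trans (le_csSup ?_ ⟨c, hmem, by simp⟩)
  refine ⟨c, ?_⟩
  rintro _ ⟨μ, hμ, rfl⟩
  exact norm_le_of_mem_spectrum_of_mulVec_le hA hx h.le hμ

theorem specRad_lt_of_mulVec_le_of_ne (hA : ∀ i j, 0 ≤ A i j)
    (hoff : ∀ i j, i ≠ j → 0 < A i j) {w : Fin n → ℝ} (hw : ∀ i, 0 < w i) {c : ℝ}
    (hle : A *ᵥ w ≤ c • w) (hne : A *ᵥ w ≠ c • w) : specRad A < c := by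
  obtain ⟨i₀, hi₀⟩ : ∃ i₀, (A *ᵥ w) i₀ < c * w i₀ := by
    by_contra! h
    exact hne (le_antisymm hle h)
  have : NeZero n := NeZero.of_pos i₀.pos
  -- `A z = c z - e` for `z = (c + A) w`, and the positive off-diagonal entries spread the
  -- nonzero defect `u = c w - A w` to every coordinate of `e = (c + A) u`.
  set u := c • w - A *ᵥ w
  set z := c • w + A *ᵥ w
  set e := c • u + A *ᵥ u
  have hAw : ∀ i, 0 ≤ (A *ᵥ w) i := mulVec_apply_nonneg hA fun i => (hw i).le
  have hu : ∀ i, 0 ≤ u i := fun i => sub_nonneg.2 (hle i)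
  have hui₀ : 0 < u i₀ := sub_pos.2 hi₀
  have hc : 0 < c := pos_of_mul_pos_left ((hAw i₀).trans_lt hi₀) (hw i₀).le
  have hz : ∀ i, 0 < z i := fun i => add_pos_of_pos_of_nonneg (mul_pos hc (hw i)) (hAw i)
  have he : ∀ i, 0 < e i := by
    intro i
    have hAu := mulVec_apply_nonneg hA hu i
    rcases eq_or_ne i i₀ with rfl | hi
    · exact add_pos_of_pos_of_nonneg (mul_pos hc hui₀) hAu
    · refine add_pos_of_nonneg_of_pos (mul_nonneg hc.le (hu i)) ?_
      exact (mul_pos (hoff i i₀ hi) hui₀).trans_le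
        (single_le_sum (fun j _ => mul_nonneg (hA i j) (hu j)) (mem_univ i₀))
  have hAz : A *ᵥ z = c • z - e := by
    simp only [z, e, u, mulVec_add, mulVec_sub, mulVec_smul]
    module
  obtain ⟨i₁, hi₁⟩ := Finite.exists_min fun i => e i / z i
  set δ := e i₁ / z i₁
  have hδ : 0 < δ := div_pos (he i₁) (hz i₁)
  have hAz_le : A *ᵥ z ≤ (c - δ) • z := fun i => by
    have : δ * z i ≤ e i := (le_div_iff₀ (hz i)).1 (hi₁ i)
    simp only [hAz, Pi.sub_apply, Pi.smul_apply, smul_eq_mul]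
    linarith
  calc specRad A ≤ c - δ := specRad_le_of_mulVec_le_s11 hA hz hAz_le
    _ < c := sub_lt_self c hδ

end SpectralRadius

section QuadraticRoot

variable {μ s T : ℝ}

noncomputable def quadRoot (μ s T : ℝ) : ℝ := (μ - s + √((μ + s) ^ 2 + 4 * s * T)) / 2

theorem quadRoot_sub_mul_add (h : 0 ≤ s * T) :
    (quadRoot μ s T - μ) * (quadRoot μ s T + s) = s * T := by
  have := Real.sq_sqrt (by nlinarith : 0 ≤ (μ + s) ^ 2 + 4 * s * T)
  unfold quadRoot
  linear_combination this / 4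

theorem le_quadRoot (h : 0 ≤ s * T) : μ ≤ quadRoot μ s T := by
  have := (le_abs_self (μ + s)).trans
    (Real.abs_le_sqrt (by nlinarith : (μ + s) ^ 2 ≤ (μ + s) ^ 2 + 4 * s * T))
  unfold quadRoot
  linarith

theorem quadRoot_add_pos (hs : 0 ≤ s) (hT : 0 ≤ T) (hμs : 0 < μ + s) :
    0 < quadRoot μ s T + s := by
  have := le_quadRoot (μ := μ) (mul_nonneg hs hT)
  linarith

theorem quadRoot_zero (h : 0 ≤ μ + s) : quadRoot μ s 0 = μ := by
  rw [quadRoot, mul_zero, add_zero, Real.sqrt_sq h]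
  ring

end QuadraticRoot

section TestVector

variable {n : ℕ} (A : Matrix (Fin n) (Fin n) ℝ)

noncomputable def excess (μ : ℝ) (i : Fin n) : ℝ := max (avg2 A i - μ) 0

noncomputable def testVec (s c μ : ℝ) (i : Fin n) : ℝ := rowSum A i * (c + s + excess A μ i)

variable {A}

theorem sum_excess_nonneg (μ : ℝ) : 0 ≤ ∑ i, excess A μ i :=
  sum_nonneg fun _ _ => le_max_right _ _

theorem sum_max_sub_eq_sum_excess {m : Fin n → ℝ} {σ : Equiv.Perm (Fin n)}
    (hm : ∀ i, m i = avg2 A (σ i)) (μ : ℝ) : ∑ i, max (m i - μ) 0 = ∑ i, excess A μ i := by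
  rw [← Equiv.sum_comp σ (excess A μ)]
  simp only [excess, hm]

theorem avg2_mul_rowSum {i : Fin n} (h : rowSum A i ≠ 0) :
    avg2 A i * rowSum A i = ∑ k, A i k * rowSum A k :=
  div_mul_cancel₀ _ h

theorem avg2_eq_of_rowSum_eq {r : ℝ} (h : ∀ k, rowSum A k = r) (i : Fin n) : avg2 A i = r := by
  rcases eq_or_ne r 0 with rfl | hr
  · simp [avg2, h]
  · simp only [avg2, h, ← sum_mul]
    rw [← rowSum, h, mul_div_cancel_right₀ _ hr]

theorem avg2_pos (hA : ∀ i j, 0 ≤ A i j) (hr : ∀ i, 0 < rowSum A i) (i : Fin n) :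
    0 < avg2 A i := by
  obtain ⟨k, -, hk⟩ := exists_lt_of_sum_lt (by simpa [rowSum] using hr i :
    ∑ k : Fin n, (0 : ℝ) < ∑ k, A i k)
  exact div_pos ((mul_pos hk (hr k)).trans_le
    (single_le_sum (fun j _ => mul_nonneg (hA i j) (hr j).le) (mem_univ k))) (hr i)

theorem specRad_eq_of_avg2_eq [NeZero n] (hA : ∀ i j, 0 ≤ A i j) (hr : ∀ i, 0 < rowSum A i)
    {μ : ℝ} (h : ∀ i, avg2 A i = μ) : specRad A = μ := by
  refine specRad_eq_of_mulVec_eq_smul hA hr (funext fun i => ?_)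
  rw [Pi.smul_apply, smul_eq_mul, ← h i, avg2_mul_rowSum (hr i).ne']
  rfl

theorem testVec_pos (hr : ∀ i, 0 < rowSum A i) {s c μ : ℝ} (hcs : 0 < c + s) (i : Fin n) :
    0 < testVec A s c μ i :=
  mul_pos (hr i) (add_pos_of_pos_of_nonneg hcs (le_max_right _ _))

variable {s c μ : ℝ}

theorem specRad_eq_quadRoot_of_avg2_eq [NeZero n] (hA : ∀ i j, 0 ≤ A i j)
    (hr : ∀ i, 0 < rowSum A i) (hμs : 0 ≤ μ + s) (h : ∀ i, avg2 A i = μ) :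
    specRad A = quadRoot μ s (∑ j, excess A μ j) := by
  have : ∑ j, excess A μ j = 0 := sum_eq_zero fun j _ => by simp [excess, h]
  rw [specRad_eq_of_avg2_eq hA hr h, this, quadRoot_zero hμs]

theorem smul_testVec_sub_mulVec (hdiag : ∀ i, A i i = 0) (hr : ∀ i, rowSum A i ≠ 0)
    (hc : (c - μ) * (c + s) = s * ∑ j, excess A μ j) (i : Fin n) :
    c * testVec A s c μ i - (A *ᵥ testVec A s c μ) i =
      (c + s) * rowSum A i * max (μ - avg2 A i) 0 +
        ∑ j ∈ univ.erase i, (s * rowSum A i - A i j * rowSum A j) * excess A μ j := by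
  have hAw : (A *ᵥ testVec A s c μ) i =
      (c + s) * (avg2 A i * rowSum A i) + ∑ j, A i j * rowSum A j * excess A μ j := by
    rw [avg2_mul_rowSum (hr i), mul_sum, ← sum_add_distrib]
    simp only [mulVec, dotProduct, testVec]
    exact sum_congr rfl fun j _ => by ring
  have hslack := add_sum_erase univ
    (fun j => (s * rowSum A i - A i j * rowSum A j) * excess A μ j) (mem_univ i)
  have hfull : ∑ j, (s * rowSum A i - A i j * rowSum A j) * excess A μ j =
      s * rowSum A i * ∑ j, excess A μ j - ∑ j, A i j * rowSum A j * excess A μ j := by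
    simp only [sub_mul, sum_sub_distrib, mul_sum]
  simp only [hdiag, zero_mul, sub_zero, hfull] at hslack
  have hmax : max (μ - avg2 A i) 0 = excess A μ i + μ - avg2 A i := by
    simp only [excess]
    rcases le_total (avg2 A i) μ with h | h
    · rw [max_eq_left (sub_nonneg.2 h), max_eq_right (sub_nonpos.2 h)]; ring
    · rw [max_eq_right (sub_nonpos.2 h), max_eq_left (sub_nonneg.2 h)]; ring
  rw [hAw, hmax, testVec]
  linear_combination rowSum A i * hc - hslack

theorem mulVec_testVec_le (hdiag : ∀ i, A i i = 0) (hr : ∀ i, 0 < rowSum A i)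
    (hoff : ∀ i j, A i j * rowSum A j ≤ s * rowSum A i) (hcs : 0 < c + s)
    (hc : (c - μ) * (c + s) = s * ∑ j, excess A μ j) :
    A *ᵥ testVec A s c μ ≤ c • testVec A s c μ := fun i => by
  have hdefect := smul_testVec_sub_mulVec hdiag (fun i => (hr i).ne') hc i
  have : 0 ≤ (c + s) * rowSum A i * max (μ - avg2 A i) 0 +
      ∑ j ∈ univ.erase i, (s * rowSum A i - A i j * rowSum A j) * excess A μ j :=
    add_nonneg (mul_nonneg (mul_nonneg hcs.le (hr i).le) (le_max_right _ _))
      (sum_nonneg fun j _ => mul_nonneg (sub_nonneg.2 (hoff i j)) (le_max_right _ _))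
  rw [Pi.smul_apply, smul_eq_mul]
  linarith

theorem le_avg2_and_mul_rowSum_eq_of_mulVec_testVec_eq (hdiag : ∀ i, A i i = 0)
    (hr : ∀ i, 0 < rowSum A i) (hoff : ∀ i j, A i j * rowSum A j ≤ s * rowSum A i)
    (hcs : 0 < c + s) (hc : (c - μ) * (c + s) = s * ∑ j, excess A μ j)
    (heq : A *ᵥ testVec A s c μ = c • testVec A s c μ) :
    (∀ i, μ ≤ avg2 A i) ∧
      ∀ i j, j ≠ i → 0 < excess A μ j → A i j * rowSum A j = s * rowSum A i := by
  have hdefect i := smul_testVec_sub_mulVec hdiag (fun i => (hr i).ne') hc i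
  have hterm i : ∀ j ∈ univ.erase i,
      0 ≤ (s * rowSum A i - A i j * rowSum A j) * excess A μ j :=
    fun j _ => mul_nonneg (sub_nonneg.2 (hoff i j)) (le_max_right _ _)
  have hzero i := (add_eq_zero_iff_of_nonneg
    (mul_nonneg (mul_nonneg hcs.le (hr i).le) (le_max_right _ _)) (sum_nonneg (hterm i))).1
    (by rw [← hdefect, heq, Pi.smul_apply, smul_eq_mul, sub_self])
  refine ⟨fun i => ?_, fun i j hj hpos => ?_⟩
  · have := (mul_eq_zero.1 (hzero i).1).resolve_left (mul_pos hcs (hr i)).ne'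
    linarith [le_max_left (μ - avg2 A i) 0]
  · have := (sum_eq_zero_iff_of_nonneg (hterm i)).1 (hzero i).2 j (mem_erase.2 ⟨hj, mem_univ j⟩)
    linarith [(mul_eq_zero.1 this).resolve_right hpos.ne']

variable (hA : ∀ i j, 0 ≤ A i j) (hdiag : ∀ i, A i i = 0) (hr : ∀ i, 0 < rowSum A i)
  (hoff : ∀ i j, A i j * rowSum A j ≤ s * rowSum A i) (hs : 0 ≤ s) (hμs : 0 < μ + s)
include hA hdiag hr hoff hs hμs

theorem specRad_le_quadRoot [NeZero n] : specRad A ≤ quadRoot μ s (∑ j, excess A μ j) := by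
  have hsT := mul_nonneg hs (sum_excess_nonneg (A := A) μ)
  have hcs := quadRoot_add_pos hs (sum_excess_nonneg (A := A) μ) hμs
  exact specRad_le_of_mulVec_le_s11 hA (testVec_pos hr hcs)
    (mulVec_testVec_le hdiag hr hoff hcs (quadRoot_sub_mul_add hsT))

theorem le_avg2_and_mul_rowSum_eq_of_specRad_eq_quadRoot (hpos : ∀ i j, i ≠ j → 0 < A i j)
    (heq : specRad A = quadRoot μ s (∑ j, excess A μ j)) :
    (∀ i, μ ≤ avg2 A i) ∧
      ∀ i j, j ≠ i → 0 < excess A μ j → A i j * rowSum A j = s * rowSum A i := by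
  have hsT := mul_nonneg hs (sum_excess_nonneg (A := A) μ)
  have hcs := quadRoot_add_pos hs (sum_excess_nonneg (A := A) μ) hμs
  have hle := mulVec_testVec_le hdiag hr hoff hcs (quadRoot_sub_mul_add hsT)
  refine le_avg2_and_mul_rowSum_eq_of_mulVec_testVec_eq hdiag hr hoff hcs
    (quadRoot_sub_mul_add hsT) ?_
  by_contra hne
  exact (specRad_lt_of_mulVec_le_of_ne hA hpos (testVec_pos hr hcs) hle hne).ne heq

end TestVector

theorem Antitone.sum_filter_lt_sub_eq_sum_max {ι : Type*} [Fintype ι] [LinearOrder ι]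
    {m : ι → ℝ} (hm : Antitone m) (l : ι) :
    ∑ i ∈ univ.filter (fun i => i < l), (m i - m l) = ∑ i, max (m i - m l) 0 := by
  have hzero : ∑ i ∈ univ.filter (fun i => ¬i < l), max (m i - m l) 0 = 0 :=
    sum_eq_zero fun i hi => max_eq_right (sub_nonpos.2 (hm (not_lt.1 (mem_filter.1 hi).2)))
  rw [← sum_filter_add_sum_filter_not univ (fun i => i < l), hzero, add_zero]
  exact sum_congr rfl fun i hi => (max_eq_left (sub_nonneg.2 (hm (mem_filter.1 hi).2.le))).symm

section Bounds

variable {n : ℕ} {A : Matrix (Fin n) (Fin n) ℝ} {d M m₀ : ℝ} (hA : ∀ i j, 0 ≤ A i j)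
  (hd : ∀ i j, A i j ≤ d) (hM : ∀ i, rowSum A i ≤ M) (hm₀ : 0 < m₀) (hm : ∀ i, m₀ ≤ rowSum A i)
include hA hd hM hm₀ hm

theorem mul_le_mul_div_mul_rowSum (i : Fin n) : d * M ≤ d * (M / m₀) * rowSum A i := by
  have hd0 : 0 ≤ d := (hA i i).trans (hd i i)
  have hM0 : 0 ≤ M / m₀ := div_nonneg (hm₀.le.trans ((hm i).trans (hM i))) hm₀.le
  calc d * M = d * (M / m₀) * m₀ := by field_simp
    _ ≤ d * (M / m₀) * rowSum A i := by gcongr; exact hm i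

theorem mul_rowSum_le_of_bounds (i j : Fin n) :
    A i j * rowSum A j ≤ d * (M / m₀) * rowSum A i :=
  (mul_le_mul (hd i j) (hM j) (hm₀.le.trans (hm j)) ((hA i j).trans (hd i j))).trans
    (mul_le_mul_div_mul_rowSum hA hd hM hm₀ hm i)

theorem eq_of_mul_rowSum_eq_of_bounds {i j : Fin n}
    (h : A i j * rowSum A j = d * (M / m₀) * rowSum A i) : A i j = d := by
  have : d * rowSum A j ≤ A i j * rowSum A j :=
    h ▸ (mul_le_mul_of_nonneg_left (hM j) ((hA i j).trans (hd i j))).trans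
      (mul_le_mul_div_mul_rowSum hA hd hM hm₀ hm i)
  exact le_antisymm (hd i j) (le_of_mul_le_mul_right this (hm₀.trans_le (hm j)))

end Bounds

namespace SimpleGraph

variable {V : Type*} {G : SimpleGraph V}

noncomputable def distMatrix (G : SimpleGraph V) : Matrix V V ℝ :=
  Matrix.of fun i j => (G.dist i j : ℝ)

@[simp]
theorem distMatrix_apply (i j : V) : G.distMatrix i j = G.dist i j := rfl

theorem distMatrix_le {d : ℕ} (h : ∀ i j, G.dist i j ≤ d) (i j : V) : G.distMatrix i j ≤ d := by
  rw [distMatrix_apply]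
  exact_mod_cast h i j

theorem Connected.dist_eq_one_of_forall_dist_eq [Nontrivial V] (hconn : G.Connected) {d : ℕ}
    (hd : ∀ i j, G.dist i j ≤ d) {j₀ : V} (h : ∀ v ≠ j₀, G.dist v j₀ = d) {i j : V}
    (hij : i ≠ j) : G.dist i j = 1 := by
  obtain ⟨u, hu⟩ := hconn.preconnected.exists_adj_of_nontrivial j₀
  have hd1 : d = 1 := (h u hu.ne.symm).symm.trans (dist_eq_one_iff_adj.2 hu.symm)
  exact le_antisymm (hd1 ▸ hd i j) (hconn.pos_dist_of_ne hij)

theorem sum_dist_eq_card_sub_one [Fintype V] [DecidableEq V]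
    (h : ∀ i j, i ≠ j → G.dist i j = 1) (v : V) : ∑ j, G.dist v j = Fintype.card V - 1 := by
  rw [← add_sum_erase _ _ (mem_univ v), dist_self, zero_add,
    sum_congr rfl fun j hj => h v j (ne_of_mem_erase hj).symm, sum_const,
    card_erase_of_mem (mem_univ v), card_univ, smul_eq_mul, mul_one]

variable {n : ℕ} {G : SimpleGraph (Fin n)}

theorem rowSum_distMatrix (G : SimpleGraph (Fin n)) (v : Fin n) :
    rowSum G.distMatrix v = ((∑ j, G.dist v j : ℕ) : ℝ) := by
  simp [rowSum]

theorem rowSum_distMatrix_le {M : ℕ} (h : ∀ v, ∑ j, G.dist v j ≤ M) (v : Fin n) :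
    rowSum G.distMatrix v ≤ M := by
  rw [rowSum_distMatrix]
  exact_mod_cast h v

theorem le_rowSum_distMatrix {M : ℕ} (h : ∀ v, M ≤ ∑ j, G.dist v j) (v : Fin n) :
    (M : ℝ) ≤ rowSum G.distMatrix v := by
  rw [rowSum_distMatrix]
  exact_mod_cast h v

theorem Connected.rowSum_distMatrix_pos [Nontrivial (Fin n)] (hconn : G.Connected)
    (v : Fin n) : 0 < rowSum G.distMatrix v := by
  obtain ⟨u, hu⟩ := exists_ne v
  rw [rowSum_distMatrix, Nat.cast_pos]
  exact (hconn.pos_dist_of_ne hu.symm).trans_le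
    (single_le_sum (fun _ _ => Nat.zero_le _) (mem_univ u))

theorem Connected.avg2_distMatrix_eq_of_mul_rowSum_eq [Nontrivial (Fin n)] (hconn : G.Connected)
    {diam Dmax Dmin : ℕ} (hdiam : ∀ i j, G.dist i j ≤ diam)
    (hDmax : ∀ v, ∑ j, G.dist v j ≤ Dmax) (hDmin0 : (0 : ℝ) < Dmin)
    (hDmin : ∀ v, Dmin ≤ ∑ j, G.dist v j) {μ : ℝ} (hμ : ∀ i, μ ≤ avg2 G.distMatrix i)
    (heq : ∀ i j, j ≠ i → 0 < excess G.distMatrix μ j →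
      G.distMatrix i j * rowSum G.distMatrix j =
        diam * ((Dmax : ℝ) / Dmin) * rowSum G.distMatrix i) (i j : Fin n) :
    avg2 G.distMatrix i = avg2 G.distMatrix j := by
  by_cases hexcess : ∃ j₀, 0 < excess G.distMatrix μ j₀
  · obtain ⟨j₀, hj₀⟩ := hexcess
    have hfar : ∀ v ≠ j₀, G.dist v j₀ = diam := fun v hv => by
      rw [← Nat.cast_inj (R := ℝ), ← distMatrix_apply]
      exact eq_of_mul_rowSum_eq_of_bounds (fun _ _ => Nat.cast_nonneg _) (distMatrix_le hdiam)
        (rowSum_distMatrix_le hDmax) hDmin0 (le_rowSum_distMatrix hDmin) (heq v j₀ hv.symm hj₀)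
    have hrow : ∀ k, rowSum G.distMatrix k = ((Fintype.card (Fin n) - 1 : ℕ) : ℝ) := fun k => by
      rw [rowSum_distMatrix, sum_dist_eq_card_sub_one
        (fun _ _ => hconn.dist_eq_one_of_forall_dist_eq hdiam hfar)]
    rw [avg2_eq_of_rowSum_eq hrow, avg2_eq_of_rowSum_eq hrow]
  · simp only [not_exists, not_lt] at hexcess
    have hconst : ∀ v, avg2 G.distMatrix v = μ := fun v =>
      le_antisymm (sub_nonpos.1 (max_le_iff.1 (hexcess v)).1) (hμ v)
    rw [hconst, hconst]

end SimpleGraph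
theorem stmt11_general {n : ℕ} (hn : 2 ≤ n) (G : SimpleGraph (Fin n))
    (hconn : G.Connected)
    (m : Fin n → ℝ) (σ : Equiv.Perm (Fin n))
    (hm : ∀ i, m i =
      (∑ j, (G.dist (σ i) j : ℝ) * (∑ k, (G.dist j k : ℝ))) /
        (∑ j, (G.dist (σ i) j : ℝ)))
    (hmono : Antitone m) (Dmax Dmin : ℕ)
    (hDmax : ∀ v, (∑ j, G.dist v j) ≤ Dmax)
    (hDmin : ∀ v, Dmin ≤ (∑ j, G.dist v j)) (hDmin' : ∃ v, (∑ j, G.dist v j) = Dmin)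
    (diam : ℕ) (hdiam : ∀ i j, G.dist i j ≤ diam)
    (l : Fin n) :
    specRad (Matrix.of (fun i j => (G.dist i j : ℝ))) ≤
      (m l - (diam : ℝ) * ((Dmax : ℝ) / (Dmin : ℝ)) +
        Real.sqrt ((m l + (diam : ℝ) * ((Dmax : ℝ) / (Dmin : ℝ))) ^ 2 +
          4 * (diam : ℝ) * ((Dmax : ℝ) / (Dmin : ℝ)) *
            ∑ i ∈ Finset.univ.filter (fun i => i < l), (m i - m l))) / 2 ∧
    (specRad (Matrix.of (fun i j => (G.dist i j : ℝ))) =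
      (m l - (diam : ℝ) * ((Dmax : ℝ) / (Dmin : ℝ)) +
        Real.sqrt ((m l + (diam : ℝ) * ((Dmax : ℝ) / (Dmin : ℝ))) ^ 2 +
          4 * (diam : ℝ) * ((Dmax : ℝ) / (Dmin : ℝ)) *
            ∑ i ∈ Finset.univ.filter (fun i => i < l), (m i - m l))) / 2 ↔
      ∀ i j, m i = m j) := by
  have : Nontrivial (Fin n) := Fin.nontrivial_iff_two_le.2 hn
  have : NeZero n := ⟨by omega⟩
  change specRad G.distMatrix ≤ _ ∧ (specRad G.distMatrix = _ ↔ _)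
  have hA : ∀ i j, 0 ≤ G.distMatrix i j := fun _ _ => Nat.cast_nonneg _
  have hr := hconn.rowSum_distMatrix_pos
  have hm' : ∀ i, m i = avg2 G.distMatrix (σ i) := hm
  have hDmin0 : (0 : ℝ) < Dmin := by
    obtain ⟨v, hv⟩ := hDmin'
    simpa [G.rowSum_distMatrix, hv] using hr v
  have hoff := mul_rowSum_le_of_bounds hA (SimpleGraph.distMatrix_le hdiam)
    (SimpleGraph.rowSum_distMatrix_le hDmax) hDmin0 (SimpleGraph.le_rowSum_distMatrix hDmin)
  have hs : (0 : ℝ) ≤ diam * (Dmax / Dmin) := by positivity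
  have hμs : 0 < m l + diam * (Dmax / Dmin) := by linarith [hm' l ▸ avg2_pos hA hr (σ l)]
  rw [mul_assoc 4 (diam : ℝ), hmono.sum_filter_lt_sub_eq_sum_max, sum_max_sub_eq_sum_excess hm']
  refine ⟨specRad_le_quadRoot hA (by simp) hr hoff hs hμs, fun heq i j => ?_, fun hconst => ?_⟩
  · obtain ⟨hμ, hext⟩ := le_avg2_and_mul_rowSum_eq_of_specRad_eq_quadRoot hA (by simp) hr hoff
      hs hμs (fun i j hij => Nat.cast_pos.2 (hconn.pos_dist_of_ne hij)) heq
    rw [hm', hm']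
    exact hconn.avg2_distMatrix_eq_of_mul_rowSum_eq hdiam hDmax hDmin0 hDmin hμ hext _ _
  · refine specRad_eq_quadRoot_of_avg2_eq hA hr hμs.le fun v => ?_
    rw [← hconst (σ.symm v) l, hm', Equiv.apply_symm_apply]

theorem stmt11 {n : ℕ} (hn : 2 ≤ n) (G : SimpleGraph (Fin n))
    (hconn : G.Connected)
    (m : Fin n → ℝ) (σ : Equiv.Perm (Fin n))
    (hm : ∀ i, m i =
      (∑ j, (G.dist (σ i) j : ℝ) * (∑ k, (G.dist j k : ℝ))) /
        (∑ j, (G.dist (σ i) j : ℝ)))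
    (hmono : Antitone m) (Dmax Dmin : ℕ)
    (hDmax : ∀ v, (∑ j, G.dist v j) ≤ Dmax) (hDmax' : ∃ v, (∑ j, G.dist v j) = Dmax)
    (hDmin : ∀ v, Dmin ≤ (∑ j, G.dist v j)) (hDmin' : ∃ v, (∑ j, G.dist v j) = Dmin)
    (diam : ℕ) (hdiam : ∀ i j, G.dist i j ≤ diam) (hdiam' : ∃ i j, G.dist i j = diam)
    (l : Fin n) :
    specRad (Matrix.of (fun i j => (G.dist i j : ℝ))) ≤
      (m l - (diam : ℝ) * ((Dmax : ℝ) / (Dmin : ℝ)) +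
        Real.sqrt ((m l + (diam : ℝ) * ((Dmax : ℝ) / (Dmin : ℝ))) ^ 2 +
          4 * (diam : ℝ) * ((Dmax : ℝ) / (Dmin : ℝ)) *
            ∑ i ∈ Finset.univ.filter (fun i => i < l), (m i - m l))) / 2 ∧
    (specRad (Matrix.of (fun i j => (G.dist i j : ℝ))) =
      (m l - (diam : ℝ) * ((Dmax : ℝ) / (Dmin : ℝ)) +
        Real.sqrt ((m l + (diam : ℝ) * ((Dmax : ℝ) / (Dmin : ℝ))) ^ 2 +
          4 * (diam : ℝ) * ((Dmax : ℝ) / (Dmin : ℝ)) *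
            ∑ i ∈ Finset.univ.filter (fun i => i < l), (m i - m l))) / 2 ↔
      ∀ i j, m i = m j) :=
  stmt11_general hn G hconn m σ hm hmono Dmax Dmin hDmax hDmin hDmin' diam hdiam l
end

section
/- Let G be a graph on n ≥ 2 vertices without isolated vertices, with average 2-degrees m_1 ≥ ... ≥ m_n. Then for each 1 ≤ l ≤ n, ρ(A(G)) ≤ (m_l − d_max/d_min + √((m_l + d_max/d_min)² + 4(d_max/d_min)(l−1)(m_1 − m_l)))/2; if moreover G is connected, equality holds if and only if m_1 = ... = m_n. -/
/-!
Write `d v` for degrees, `b = dmax / dmin`, `t = m l`, `m₀ = m 0`, `M v` for the average 2-degree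
of `v`, and let `x` be the larger root of `(x - t) (x + b) = b l (m₀ - t)` (`l : Fin n` is 0-based,
so it is the paper's `l - 1`). Perturb the degree vector to `w v = (1 + s v) d v` with
`s v = (M v - t)⁺ / (x + b)`. Since the `m i` are sorted, `∑ (M v - t)⁺ ≤ l (m₀ - t)`, and since
every degree is at most `b` times any other, `(A w) v ≤ x w v` in every row. Comparing an
eigenvector `f` with the least multiple of `w` dominating `|f|` (Collatz–Wielandt) bounds every
eigenvalue, hence the spectral radius, by `x`.

If `G` is connected and the bound is attained, the same comparison propagates along edges and makes
every row tight. Tightness gives `M v ≥ t` everywhere, and `d W = b d v` for all `v ≠ W` whenever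
`M W > t`, which makes `M W` the least average 2-degree; so all `M v` coincide. Conversely, if they
all equal `t`, the degree vector is an eigenvector for `t`, and the bound is then `x = t`.
-/

open Matrix BigOperators Finset

theorem le_of_two_mul_eq_add_sqrt {t b c x : ℝ} (hc : 0 ≤ c)
    (hx : 2 * x = t - b + √((t + b) ^ 2 + 4 * c)) : t ≤ x := by
  have : t + b ≤ √((t + b) ^ 2 + 4 * c) :=
    Real.le_sqrt_of_sq_le (by linarith)
  linarith

theorem sub_mul_add_eq_of_two_mul_eq_add_sqrt {t b c x : ℝ} (hc : 0 ≤ c)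
    (hx : 2 * x = t - b + √((t + b) ^ 2 + 4 * c)) : (x - t) * (x + b) = c := by
  have hsq := Real.sq_sqrt (by positivity : 0 ≤ (t + b) ^ 2 + 4 * c)
  rw [show √((t + b) ^ 2 + 4 * c) = 2 * x - t + b by linarith] at hsq
  linear_combination hsq / 4

theorem sum_max_sub_le_of_antitone {n : ℕ} {m : Fin n → ℝ} (hm : Antitone m) {a : ℝ}
    (ha : ∀ i, m i ≤ a) (k : Fin n) : ∑ i, max (m i - m k) 0 ≤ k * (a - m k) :=
  calc ∑ i, max (m i - m k) 0 = ∑ i ∈ Iio k, max (m i - m k) 0 := by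
        refine (sum_subset (subset_univ _) fun i _ hi => ?_).symm
        exact max_eq_right (sub_nonpos.mpr (hm (not_lt.mp (by simpa using hi))))
    _ ≤ #(Iio k) • (a - m k) :=
        sum_le_card_nsmul _ _ _ fun i _ => max_le (by linarith [ha i]) (by linarith [ha k])
    _ = k * (a - m k) := by rw [Fin.card_Iio, nsmul_eq_mul]

namespace Matrix

variable {ι : Type*} [Fintype ι] [DecidableEq ι]

theorem mem_spectrum_iff_exists_mulVec_eq_smul_s18 {A : Matrix ι ι ℂ} {μ : ℂ} :
    μ ∈ spectrum ℂ A ↔ ∃ f ≠ 0, A *ᵥ f = μ • f := by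
  rw [← spectrum_toLin', ← Module.End.hasEigenvalue_iff_mem_spectrum]
  constructor
  · intro h
    simpa [Module.End.hasEigenvector_iff, and_comm] using h.exists_hasEigenvector
  · rintro ⟨f, hf, hAf⟩
    exact Module.End.hasEigenvalue_of_hasEigenvector
      (Module.End.hasEigenvector_iff.mpr ⟨by simpa using hAf, hf⟩)

theorem ofReal_mem_spectrum_map_ofReal {A : Matrix ι ι ℝ} {x : ℝ} {f : ι → ℝ} (hf : f ≠ 0)
    (hAf : A *ᵥ f = x • f) : (x : ℂ) ∈ spectrum ℂ (A.map Complex.ofReal) := by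
  refine mem_spectrum_iff_exists_mulVec_eq_smul_s18.mpr ⟨Complex.ofRealHom ∘ f, ?_, ?_⟩
  · simpa [funext_iff] using hf
  · ext i
    have := Complex.ofRealHom.map_mulVec A f i
    rw [hAf] at this
    exact this.symm.trans (by simp)

theorem spectrum_nonempty [Nonempty ι] (A : Matrix ι ι ℂ) : (spectrum ℂ A).Nonempty := by
  obtain ⟨μ, hμ⟩ := IsAlgClosed.exists_root A.charpoly (by simp [charpoly_degree_eq_dim])
  exact ⟨μ, mem_spectrum_iff_isRoot_charpoly.mpr hμ⟩

end Matrix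

section SpectralRadius

variable {n : ℕ} (A : Matrix (Fin n) (Fin n) ℝ)

theorem specRad_set_eq_image :
    {x : ℝ | ∃ μ ∈ spectrum ℂ (A.map Complex.ofReal), x = ‖μ‖} =
      (‖·‖) '' spectrum ℂ (A.map Complex.ofReal) := by
  ext; simp [eq_comm]

theorem norm_le_specRad {μ : ℂ} (hμ : μ ∈ spectrum ℂ (A.map Complex.ofReal)) :
    ‖μ‖ ≤ specRad A := by
  refine le_csSup ?_ ⟨μ, hμ, rfl⟩
  rw [specRad_set_eq_image]
  exact ((finite_spectrum _).image _).bddAbove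

theorem exists_norm_eq_specRad [NeZero n] :
    ∃ μ ∈ spectrum ℂ (A.map Complex.ofReal), ‖μ‖ = specRad A := by
  have hne := (spectrum_nonempty (A.map Complex.ofReal)).image (‖·‖)
  obtain ⟨μ, hμ, h⟩ := hne.csSup_mem ((finite_spectrum _).image _)
  exact ⟨μ, hμ, by rw [specRad, specRad_set_eq_image]; exact h⟩

end SpectralRadius

theorem exists_norm_le_mul_of_ne_zero {ι E : Type*} [Finite ι] [NormedAddCommGroup E]
    {f : ι → E} (hf : f ≠ 0) {w : ι → ℝ} (hw : ∀ i, 0 < w i) :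
    ∃ K > 0, ∃ i, ‖f i‖ = K * w i ∧ ∀ j, ‖f j‖ ≤ K * w j := by
  obtain ⟨k, hk⟩ := Function.ne_iff.mp hf
  have : Nonempty ι := ⟨k⟩
  obtain ⟨i, hi⟩ := Finite.exists_max fun j => ‖f j‖ / w j
  refine ⟨‖f i‖ / w i, (div_pos (norm_pos_iff.mpr hk) (hw k)).trans_le (hi k), i,
    (div_mul_cancel₀ _ (hw i).ne').symm, fun j => ?_⟩
  rw [← div_le_iff₀ (hw j)]
  exact hi j

namespace SimpleGraph

variable {V : Type*} (G : SimpleGraph V)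

theorem adjMatrix_map {α β : Type*} [Zero α] [One α] [Zero β] [One β] [DecidableRel G.Adj]
    (f : α → β) (h₀ : f 0 = 0) (h₁ : f 1 = 1) : (G.adjMatrix α).map f = G.adjMatrix β := by
  ext i j
  by_cases h : G.Adj i j <;> simp [h, h₀, h₁]

theorem Connected.forall_of_adj {G : SimpleGraph V} (hG : G.Connected) {p : V → Prop}
    (hp : ∀ u v, G.Adj u v → p u → p v) {u : V} (hu : p u) (v : V) : p v := by
  obtain ⟨q⟩ := hG.preconnected u v
  induction q with
  | nil => exact hu
  | cons hadj _ ih => exact ih (hp _ _ hadj hu)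

variable [Fintype V] [DecidableRel G.Adj]

section CollatzWielandt

variable {w : V → ℝ} {x : ℝ} {μ : ℂ} {f : V → ℂ}

theorem norm_mul_le_sum_neighbor_norm (hf : G.adjMatrix ℂ *ᵥ f = μ • f) (v : V) :
    ‖μ‖ * ‖f v‖ ≤ ∑ j ∈ G.neighborFinset v, ‖f j‖ := by
  have hv : ∑ j ∈ G.neighborFinset v, f j = μ * f v := by
    simpa [adjMatrix_mulVec_apply] using congrFun hf v
  rw [← norm_mul, ← hv]
  exact norm_sum_le _ _

theorem sum_slack_le_of_norm_eq (hf : G.adjMatrix ℂ *ᵥ f = μ • f) {K : ℝ} {i : V}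
    (hi : ‖f i‖ = K * w i) :
    ∑ j ∈ G.neighborFinset i, (K * w j - ‖f j‖) + K * (x * w i - ∑ j ∈ G.neighborFinset i, w j)
      ≤ (x - ‖μ‖) * ‖f i‖ := by
  have := G.norm_mul_le_sum_neighbor_norm hf i
  have hx : x * ‖f i‖ = K * (x * w i) := by rw [hi]; ring
  rw [sum_sub_distrib, ← mul_sum]
  linarith

variable (hw : ∀ v, 0 < w v) (hrow : ∀ v, ∑ j ∈ G.neighborFinset v, w j ≤ x * w v)
  (hf : G.adjMatrix ℂ *ᵥ f = μ • f) (hf₀ : f ≠ 0)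
include hw hrow hf hf₀

theorem norm_le_of_sum_neighbor_le : ‖μ‖ ≤ x := by
  obtain ⟨K, hK₀, i, hi, hK⟩ := exists_norm_le_mul_of_ne_zero hf₀ hw
  have hslack := G.sum_slack_le_of_norm_eq (x := x) hf hi
  have hA : 0 ≤ ∑ j ∈ G.neighborFinset i, (K * w j - ‖f j‖) :=
    sum_nonneg fun j _ => sub_nonneg.mpr (hK j)
  have hB : 0 ≤ K * (x * w i - ∑ j ∈ G.neighborFinset i, w j) :=
    mul_nonneg hK₀.le (sub_nonneg.mpr (hrow i))
  have hfi : 0 < ‖f i‖ := hi ▸ mul_pos hK₀ (hw i)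
  nlinarith

theorem sum_neighbor_eq_of_norm_eq (hG : G.Connected) (hμ : ‖μ‖ = x) (v : V) :
    ∑ j ∈ G.neighborFinset v, w j = x * w v := by
  obtain ⟨K, hK₀, i₀, hi₀, hK⟩ := exists_norm_le_mul_of_ne_zero hf₀ hw
  have htight : ∀ i, ‖f i‖ = K * w i →
      (∀ j ∈ G.neighborFinset i, ‖f j‖ = K * w j) ∧
        ∑ j ∈ G.neighborFinset i, w j = x * w i := by
    intro i hi
    have hslack := G.sum_slack_le_of_norm_eq (x := x) hf hi
    rw [hμ, sub_self, zero_mul] at hslack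
    have hA : 0 ≤ ∑ j ∈ G.neighborFinset i, (K * w j - ‖f j‖) :=
      sum_nonneg fun j _ => sub_nonneg.mpr (hK j)
    have hB : 0 ≤ x * w i - ∑ j ∈ G.neighborFinset i, w j := sub_nonneg.mpr (hrow i)
    have hA₀ := (sum_eq_zero_iff_of_nonneg fun j _ => sub_nonneg.mpr (hK j)).mp
      (by nlinarith : ∑ j ∈ G.neighborFinset i, (K * w j - ‖f j‖) = 0)
    refine ⟨fun j hj => (sub_eq_zero.mp (hA₀ j hj)).symm, ?_⟩
    nlinarith
  have hall : ∀ v, ‖f v‖ = K * w v :=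
    hG.forall_of_adj (fun u v huv hu => (htight u hu).1 v ((G.mem_neighborFinset u v).mpr huv)) hi₀
  exact (htight v (hall v)).2

end CollatzWielandt

noncomputable def averageTwoDegree (v : V) : ℝ :=
  (∑ j ∈ G.neighborFinset v, (G.degree j : ℝ)) / G.degree v

noncomputable def perturbedDegree (s : V → ℝ) (v : V) : ℝ :=
  (1 + s v) * G.degree v

variable {G}

theorem sum_degree_neighborFinset {v : V} (hv : 0 < G.degree v) :
    ∑ j ∈ G.neighborFinset v, (G.degree j : ℝ) = G.averageTwoDegree v * G.degree v :=
  (div_mul_cancel₀ _ (by positivity)).symm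

theorem averageTwoDegree_nonneg (v : V) : 0 ≤ G.averageTwoDegree v := by
  unfold averageTwoDegree; positivity

theorem adjMatrix_mulVec_degree (hdeg : ∀ v, 0 < G.degree v) (v : V) :
    (G.adjMatrix ℝ *ᵥ fun j => (G.degree j : ℝ)) v = G.averageTwoDegree v * G.degree v := by
  rw [adjMatrix_mulVec_apply, sum_degree_neighborFinset (hdeg v)]

theorem averageTwoDegree_le_of_forall_degree_eq_mul (hdeg : ∀ v, 0 < G.degree v) {W : V} {b : ℝ}
    (hb : 1 ≤ b) (hW : ∀ j ≠ W, (G.degree W : ℝ) = b * G.degree j) (v : V) :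
    G.averageTwoDegree W ≤ G.averageTwoDegree v := by
  have hdW : (0 : ℝ) < G.degree W := by exact_mod_cast hdeg W
  have hdv : (0 : ℝ) < G.degree v := by exact_mod_cast hdeg v
  have hle : ∀ j, (G.degree W : ℝ) ≤ b * G.degree j := fun j => by
    rcases eq_or_ne j W with rfl | hj
    · nlinarith
    · exact (hW j hj).le
  have hMW : b * G.averageTwoDegree W * G.degree W = G.degree W * G.degree W := by
    rw [mul_assoc, ← sum_degree_neighborFinset (hdeg W), mul_sum,
      sum_congr rfl fun j hj => (hW j (G.ne_of_adj ((G.mem_neighborFinset W j).mp hj)).symm).symm,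
      sum_const, card_neighborFinset_eq_degree, nsmul_eq_mul]
  have hMv : (G.degree v : ℝ) * G.degree W ≤ b * G.averageTwoDegree v * G.degree v := by
    rw [mul_assoc, ← sum_degree_neighborFinset (hdeg v), mul_sum]
    calc (G.degree v : ℝ) * G.degree W = ∑ j ∈ G.neighborFinset v, (G.degree W : ℝ) := by
          rw [sum_const, card_neighborFinset_eq_degree, nsmul_eq_mul]
      _ ≤ _ := sum_le_sum fun j _ => hle j
  have h1 : b * G.averageTwoDegree W = G.degree W := mul_right_cancel₀ hdW.ne' hMW
  have h2 : (G.degree W : ℝ) ≤ b * G.averageTwoDegree v := le_of_mul_le_mul_left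
    (by linarith) hdv
  exact le_of_mul_le_mul_left (h1 ▸ h2) (by linarith)

section PerturbedDegreeWeight

variable {s : V → ℝ} {b t x : ℝ} {μ : ℂ} {f : V → ℂ}

theorem sub_ite_degree_nonneg (hdb : ∀ u v, (G.degree u : ℝ) ≤ b * G.degree v) (v j : V) :
    0 ≤ b * G.degree v - if G.Adj v j then (G.degree j : ℝ) else 0 := by
  split_ifs
  · exact sub_nonneg.mpr (hdb j v)
  · exact sub_nonneg.mpr ((Nat.cast_nonneg _).trans (hdb v v))

theorem one_le_of_degree_le_mul (hdeg : ∀ v, 0 < G.degree v)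
    (hdb : ∀ u v, (G.degree u : ℝ) ≤ b * G.degree v) (v : V) : 1 ≤ b := by
  have : (0 : ℝ) < G.degree v := by exact_mod_cast hdeg v
  nlinarith [hdb v v]

theorem exists_perturbation_of_sum_max_le (hxb : 0 < x + b)
    (hS : b * ∑ v, max (G.averageTwoDegree v - t) 0 ≤ (x - t) * (x + b)) :
    ∃ s : V → ℝ, (∀ v, 0 ≤ s v) ∧ b * ∑ v, s v ≤ x - t ∧
      ∀ v, G.averageTwoDegree v - t ≤ (x + b) * s v := by
  refine ⟨fun v => max (G.averageTwoDegree v - t) 0 / (x + b),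
    fun v => div_nonneg (le_max_right _ _) hxb.le, ?_, fun v => ?_⟩
  · rwa [← sum_div, mul_div_assoc', div_le_iff₀ hxb]
  · rw [mul_div_cancel₀ _ hxb.ne']
    exact le_max_left _ _

theorem perturbedDegree_pos (hdeg : ∀ v, 0 < G.degree v) (hs : ∀ v, 0 ≤ s v) (v : V) :
    0 < G.perturbedDegree s v :=
  mul_pos (by linarith [hs v]) (by exact_mod_cast hdeg v)

variable [DecidableEq V]

theorem sum_neighbor_perturbedDegree_add_slack {v : V} (hv : 0 < G.degree v) :
    ∑ j ∈ G.neighborFinset v, G.perturbedDegree s j +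
      (∑ j ∈ univ.erase v, s j * (b * G.degree v - if G.Adj v j then (G.degree j : ℝ) else 0) +
        G.degree v * (x - t - b * ∑ j, s j) +
        G.degree v * ((x + b) * s v - (G.averageTwoDegree v - t))) =
      x * G.perturbedDegree s v := by
  have hadj : ∑ j ∈ univ.erase v, s j * (if G.Adj v j then (G.degree j : ℝ) else 0) =
      ∑ j ∈ G.neighborFinset v, s j * G.degree j := by
    rw [sum_erase _ (by simp), neighborFinset_eq_filter, sum_filter]
    simp only [mul_ite, mul_zero]
  have hsum : ∑ j ∈ G.neighborFinset v, G.perturbedDegree s j =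
      G.averageTwoDegree v * G.degree v + ∑ j ∈ G.neighborFinset v, s j * G.degree j := by
    simp only [perturbedDegree, add_mul, one_mul, sum_add_distrib, sum_degree_neighborFinset hv]
  simp only [mul_sub, sum_sub_distrib]
  rw [hadj, hsum, ← sum_mul, sum_erase_eq_sub (mem_univ v), perturbedDegree]
  ring

variable (hdeg : ∀ v, 0 < G.degree v) (hdb : ∀ u v, (G.degree u : ℝ) ≤ b * G.degree v)
  (hs : ∀ v, 0 ≤ s v) (hS : b * ∑ j, s j ≤ x - t)
  (hsM : ∀ v, G.averageTwoDegree v - t ≤ (x + b) * s v)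
include hdeg hdb hs hS hsM

theorem sum_neighbor_perturbedDegree_le (v : V) :
    ∑ j ∈ G.neighborFinset v, G.perturbedDegree s j ≤ x * G.perturbedDegree s v := by
  have hslack :=
    sum_neighbor_perturbedDegree_add_slack (s := s) (b := b) (t := t) (x := x) (hdeg v)
  have hA := sum_nonneg fun j (_ : j ∈ univ.erase v) =>
    mul_nonneg (hs j) (sub_ite_degree_nonneg hdb v j)
  have hB : 0 ≤ (G.degree v : ℝ) * (x - t - b * ∑ j, s j) := by
    have := sub_nonneg.mpr hS
    positivity
  have hC : 0 ≤ (G.degree v : ℝ) * ((x + b) * s v - (G.averageTwoDegree v - t)) := by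
    have := sub_nonneg.mpr (hsM v)
    positivity
  linarith

theorem of_sum_neighbor_perturbedDegree_eq {v : V}
    (hv : ∑ j ∈ G.neighborFinset v, G.perturbedDegree s j = x * G.perturbedDegree s v) :
    G.averageTwoDegree v - t = (x + b) * s v ∧
      ∀ j ≠ v, 0 < s j → (G.degree j : ℝ) = b * G.degree v := by
  have hslack :=
    sum_neighbor_perturbedDegree_add_slack (s := s) (b := b) (t := t) (x := x) (hdeg v)
  have hdv : (0 : ℝ) < G.degree v := by exact_mod_cast hdeg v
  have hA := sum_nonneg fun j (_ : j ∈ univ.erase v) =>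
    mul_nonneg (hs j) (sub_ite_degree_nonneg hdb v j)
  have hB := mul_nonneg hdv.le (sub_nonneg.mpr hS)
  have hC := mul_nonneg hdv.le (sub_nonneg.mpr (hsM v))
  refine ⟨?_, fun j hj hsj => ?_⟩
  · nlinarith
  · have hA₀ := (sum_eq_zero_iff_of_nonneg fun j (_ : j ∈ univ.erase v) =>
      mul_nonneg (hs j) (sub_ite_degree_nonneg hdb v j)).mp (by linarith) j (by simpa using hj)
    rw [mul_eq_zero, sub_eq_zero] at hA₀
    rcases hA₀ with hsj₀ | hbd
    · exact absurd hsj₀ hsj.ne'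
    · split_ifs at hbd with hadj
      · exact hbd.symm
      · nlinarith [hdb v v]

theorem norm_le_of_adjMatrix_mulVec_eq_smul (hf : G.adjMatrix ℂ *ᵥ f = μ • f) (hf₀ : f ≠ 0) :
    ‖μ‖ ≤ x :=
  G.norm_le_of_sum_neighbor_le (perturbedDegree_pos hdeg hs)
    (sum_neighbor_perturbedDegree_le hdeg hdb hs hS hsM) hf hf₀

theorem averageTwoDegree_eq_of_norm_eq (hG : G.Connected) (hf : G.adjMatrix ℂ *ᵥ f = μ • f)
    (hf₀ : f ≠ 0) (hμ : ‖μ‖ = x) (u v : V) : G.averageTwoDegree u = G.averageTwoDegree v := by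
  have htight := fun v => of_sum_neighbor_perturbedDegree_eq hdeg hdb hs hS hsM
    (G.sum_neighbor_eq_of_norm_eq (perturbedDegree_pos hdeg hs)
      (sum_neighbor_perturbedDegree_le hdeg hdb hs hS hsM) hf hf₀ hG hμ v)
  have hb := one_le_of_degree_le_mul hdeg hdb u
  have hxb : 0 < x + b := by linarith [hμ ▸ norm_nonneg μ]
  have hmin : ∀ W, 0 < s W → ∀ v, G.averageTwoDegree W ≤ G.averageTwoDegree v :=
    fun W hW => averageTwoDegree_le_of_forall_degree_eq_mul hdeg hb fun j hj =>
      (htight j).2 W hj.symm hW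
  -- A vertex with positive perturbation has the least average 2-degree, so once one vertex has
  -- positive perturbation, all of them do, and then every vertex has the least average 2-degree.
  by_cases hpos : ∃ W, 0 < s W
  · obtain ⟨W, hW⟩ := hpos
    have hall : ∀ v, 0 < s v := fun v => by
      have := hmin W hW v
      have := (htight v).1
      have := (htight W).1
      nlinarith [hs v]
    exact le_antisymm (hmin u (hall u) v) (hmin v (hall v) u)
  · simp only [not_exists, not_lt] at hpos
    have hzero : ∀ v, G.averageTwoDegree v = t := fun v => by
      have := (htight v).1
      rw [le_antisymm (hpos v) (hs v), mul_zero] at this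
      linarith
    rw [hzero u, hzero v]

end PerturbedDegreeWeight

section SpectralRadius

variable {n : ℕ} [NeZero n] {G : SimpleGraph (Fin n)} [DecidableRel G.Adj]

theorem exists_eigenvector_norm_eq_specRad :
    ∃ (μ : ℂ) (f : Fin n → ℂ), f ≠ 0 ∧ G.adjMatrix ℂ *ᵥ f = μ • f ∧
      ‖μ‖ = specRad (G.adjMatrix ℝ) := by
  obtain ⟨μ, hμ, hnorm⟩ := exists_norm_eq_specRad (G.adjMatrix ℝ)
  rw [G.adjMatrix_map _ Complex.ofReal_zero Complex.ofReal_one,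
    mem_spectrum_iff_exists_mulVec_eq_smul_s18] at hμ
  obtain ⟨f, hf₀, hf⟩ := hμ
  exact ⟨μ, f, hf₀, hf, hnorm⟩

theorem le_specRad_of_averageTwoDegree_eq (hdeg : ∀ v, 0 < G.degree v) {t : ℝ}
    (ht : ∀ v, G.averageTwoDegree v = t) : t ≤ specRad (G.adjMatrix ℝ) := by
  have hf : G.adjMatrix ℝ *ᵥ (fun j => (G.degree j : ℝ)) = t • fun j => (G.degree j : ℝ) :=
    funext fun v => by rw [adjMatrix_mulVec_degree hdeg, ht, Pi.smul_apply, smul_eq_mul]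
  have hf₀ : (fun j => (G.degree j : ℝ)) ≠ 0 := fun h => (hdeg 0).ne' (by simpa using congrFun h 0)
  calc t ≤ ‖(t : ℂ)‖ := by rw [Complex.norm_real, Real.norm_eq_abs]; exact le_abs_self t
    _ ≤ specRad (G.adjMatrix ℝ) := norm_le_specRad _ (ofReal_mem_spectrum_map_ofReal hf₀ hf)

variable {b t x : ℝ} (hdeg : ∀ v, 0 < G.degree v)
  (hdb : ∀ u v, (G.degree u : ℝ) ≤ b * G.degree v) (hxb : 0 < x + b)
  (hS : b * ∑ v, max (G.averageTwoDegree v - t) 0 ≤ (x - t) * (x + b))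
include hdeg hdb hxb hS

theorem specRad_adjMatrix_le : specRad (G.adjMatrix ℝ) ≤ x := by
  obtain ⟨s, hs, hS, hsM⟩ := exists_perturbation_of_sum_max_le hxb hS
  obtain ⟨μ, f, hf₀, hf, hμ⟩ := exists_eigenvector_norm_eq_specRad (G := G)
  exact hμ ▸ norm_le_of_adjMatrix_mulVec_eq_smul hdeg hdb hs hS hsM hf hf₀

theorem averageTwoDegree_eq_of_specRad_eq (hG : G.Connected) (hx : specRad (G.adjMatrix ℝ) = x)
    (u v : Fin n) : G.averageTwoDegree u = G.averageTwoDegree v := by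
  obtain ⟨s, hs, hS, hsM⟩ := exists_perturbation_of_sum_max_le hxb hS
  obtain ⟨μ, f, hf₀, hf, hμ⟩ := exists_eigenvector_norm_eq_specRad (G := G)
  exact averageTwoDegree_eq_of_norm_eq hdeg hdb hs hS hsM hG hf hf₀ (hμ.trans hx) u v

end SpectralRadius

end SimpleGraph

open SimpleGraph in
theorem stmt18 {n : ℕ} (hn : 2 ≤ n) (G : SimpleGraph (Fin n)) [DecidableRel G.Adj]
    (hiso : ∀ v, 0 < G.degree v)
    (m : Fin n → ℝ) (σ : Equiv.Perm (Fin n))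
    (hm : ∀ i, m i =
      (∑ j ∈ G.neighborFinset (σ i), (G.degree j : ℝ)) / (G.degree (σ i) : ℝ))
    (hmono : Antitone m) (dmax dmin : ℕ)
    (hdmax : ∀ v, G.degree v ≤ dmax)
    (hdmin : ∀ v, dmin ≤ G.degree v) (hdmin' : ∃ v, G.degree v = dmin)
    (l : Fin n) :
    specRad (G.adjMatrix ℝ) ≤ (m l - (dmax : ℝ) / (dmin : ℝ) +
      Real.sqrt ((m l + (dmax : ℝ) / (dmin : ℝ)) ^ 2 +
        4 * ((dmax : ℝ) / (dmin : ℝ)) * (l : ℝ) *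
          (m (⟨0, by omega⟩ : Fin n) - m l))) / 2 ∧
    (G.Connected →
      (specRad (G.adjMatrix ℝ) = (m l - (dmax : ℝ) / (dmin : ℝ) +
        Real.sqrt ((m l + (dmax : ℝ) / (dmin : ℝ)) ^ 2 +
          4 * ((dmax : ℝ) / (dmin : ℝ)) * (l : ℝ) *
            (m (⟨0, by omega⟩ : Fin n) - m l))) / 2 ↔
        ∀ i j, m i = m j)) := by
  have : NeZero n := ⟨by omega⟩
  obtain ⟨v₁, hv₁⟩ := hdmin'
  set b : ℝ := (dmax : ℝ) / dmin
  set m₀ := m ⟨0, by omega⟩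
  set x := (m l - b + √((m l + b) ^ 2 + 4 * b * (l : ℝ) * (m₀ - m l))) / 2 with hx
  have hmσ : ∀ i, m i = G.averageTwoDegree (σ i) := hm
  have hm₀ : ∀ i, m i ≤ m₀ := fun i => hmono (Nat.zero_le _)
  have hdb : ∀ u v, (G.degree u : ℝ) ≤ b * G.degree v := fun u v => by
    rw [div_mul_eq_mul_div, le_div_iff₀ (by exact_mod_cast hv₁ ▸ hiso v₁)]
    exact_mod_cast Nat.mul_le_mul (hdmax u) (hdmin v)
  have hb := one_le_of_degree_le_mul hiso hdb v₁
  have hml : 0 ≤ m l := hmσ l ▸ averageTwoDegree_nonneg _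
  have hc : 0 ≤ b * l * (m₀ - m l) :=
    mul_nonneg (mul_nonneg (by linarith) l.val.cast_nonneg) (sub_nonneg.mpr (hm₀ l))
  have hx₂ : 2 * x = m l - b + √((m l + b) ^ 2 + 4 * (b * l * (m₀ - m l))) := by
    rw [hx, ← mul_assoc, ← mul_assoc]; ring
  have hxq := sub_mul_add_eq_of_two_mul_eq_add_sqrt hc hx₂
  have hxb : 0 < x + b := by linarith [le_of_two_mul_eq_add_sqrt hc hx₂]
  have hS : b * ∑ v, max (G.averageTwoDegree v - m l) 0 ≤ (x - m l) * (x + b) := by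
    rw [hxq, ← Equiv.sum_comp σ, mul_assoc]
    simp_rw [← hmσ]
    exact mul_le_mul_of_nonneg_left (sum_max_sub_le_of_antitone hmono hm₀ l) (by linarith)
  refine ⟨specRad_adjMatrix_le hiso hdb hxb hS, fun hG => ⟨fun heq i j => ?_, fun hall => ?_⟩⟩
  · rw [hmσ i, hmσ j]
    exact averageTwoDegree_eq_of_specRad_eq hiso hdb hxb hS hG heq _ _
  · have hxm : x = m l := by
      have h : (x - m l) * (x + b) = 0 := by rw [hxq, show m₀ = m l from hall _ _]; ring
      linarith [(mul_eq_zero.mp h).resolve_right hxb.ne']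
    refine le_antisymm (specRad_adjMatrix_le hiso hdb hxb hS)
      (hxm ▸ le_specRad_of_averageTwoDegree_eq hiso fun v => ?_)
    rw [← σ.apply_symm_apply v, ← hmσ]
    exact hall _ _
end
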